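/- arXiv:0704.2931 — 13 statements merged into one kernel-verified Lean document; each statement's English description precedes it below -/
import Mathlib

section
/- Let n be a finite type with decidable equality, and let A, B : Matrix n n ℝ with A positive definite and B symmetric. Then there exists an invertible matrix P : Matrix n n ℝ and a vector d : n → ℝ such that Pᵀ * A * P = 1 and Pᵀ * B * P = Matrix.diagonal d, and moreover for every i the value d i is a root of the pencil polynomial det(X • A.map C − B.map C) ∈ ℝ[X]. (Weierstrass 1858: a pair of real quadratic forms (Φ, Ψ) with Φ definite can be simultaneously transformed into Σᵢ Xᵢ² and Σᵢ dᵢ Xᵢ², regardless of whether the roots of the pencil determinant are distinct.) -/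
/-!
Normalise `A` to the identity by congruence: with `A = U diag(λ) Uᵀ` (spectral theorem, `λ > 0`),
`Q = U diag(λ^{-1/2})` gives `Qᵀ A Q = 1`. The congruent matrix `Qᵀ B Q` is still symmetric, so an
orthogonal `V` diagonalises it, and `P = Q V` keeps `Pᵀ A P = Vᵀ V = 1`. Finally
`Pᵀ (d i • A - B) P = diag(d i - d j)` is singular and `det P` is a unit, so
`det (d i • A - B) = 0`, which is the pencil polynomial evaluated at `d i`.
-/

open Polynomial Matrix

namespace Matrix

variable {n : Type*} [Fintype n] [DecidableEq n]

theorem eval_det_X_smul_map_C_sub_map_C {R : Type*} [CommRing R] (A B : Matrix n n R) (t : R) :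
    (det ((X : R[X]) • A.map C - B.map C)).eval t = det (t • A - B) := by
  rw [← coe_evalRingHom, RingHom.map_det]
  congr 1
  ext i j
  simp [mul_comm t]

theorem det_smul_sub_eq_zero_of_transpose_mul_mul {R : Type*} [CommRing R]
    {A B P : Matrix n n R} {d : n → R} (hA : Pᵀ * A * P = 1) (hB : Pᵀ * B * P = diagonal d)
    (i : n) : det (d i • A - B) = 0 := by
  have hconj : Pᵀ * (d i • A - B) * P = diagonal fun j ↦ d i - d j := by
    rw [Matrix.mul_sub, Matrix.sub_mul, Matrix.mul_smul, Matrix.smul_mul, hA, hB]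
    ext j k
    by_cases h : j = k <;> simp [h]
  have hP : IsUnit P.det := isUnit_det_of_left_inverse hA
  have := congr_arg det hconj
  rwa [det_mul, det_mul, det_transpose, det_diagonal,
    Finset.prod_eq_zero (Finset.mem_univ i) (sub_self _), hP.mul_left_eq_zero,
    hP.mul_right_eq_zero] at this

theorem IsHermitian.transpose_eigenvectorUnitary_mul_self {M : Matrix n n ℝ} (hM : M.IsHermitian) :
    (hM.eigenvectorUnitary : Matrix n n ℝ)ᵀ * hM.eigenvectorUnitary = 1 :=
  Unitary.coe_star_mul_self hM.eigenvectorUnitary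

theorem IsHermitian.transpose_eigenvectorUnitary_mul_mul {M : Matrix n n ℝ} (hM : M.IsHermitian) :
    (hM.eigenvectorUnitary : Matrix n n ℝ)ᵀ * M * hM.eigenvectorUnitary =
      diagonal hM.eigenvalues := by
  simpa [Unitary.conjStarAlgAut_star_apply, star_eq_conjTranspose] using
    hM.conjStarAlgAut_star_eigenvectorUnitary

theorem PosDef.exists_transpose_mul_mul_eq_one {A : Matrix n n ℝ} (hA : A.PosDef) :
    ∃ Q : Matrix n n ℝ, Qᵀ * A * Q = 1 := by
  set U := (hA.1.eigenvectorUnitary : Matrix n n ℝ)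
  set ev := hA.1.eigenvalues
  refine ⟨U * diagonal fun i ↦ (√(ev i))⁻¹, ?_⟩
  calc _ = diagonal (fun i ↦ (√(ev i))⁻¹) * (Uᵀ * A * U) * diagonal fun i ↦ (√(ev i))⁻¹ := by
        simp only [transpose_mul, diagonal_transpose, Matrix.mul_assoc]
    _ = 1 := by
        rw [hA.1.transpose_eigenvectorUnitary_mul_mul, diagonal_mul_diagonal,
          diagonal_mul_diagonal, ← diagonal_one]
        congr 1
        ext i
        have hev : 0 < ev i := hA.eigenvalues_pos i
        field_simp
        rw [Real.sq_sqrt hev.le]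

theorem PosDef.exists_simultaneous_diagonalization {A B : Matrix n n ℝ} (hA : A.PosDef)
    (hB : B.IsSymm) :
    ∃ (P : Matrix n n ℝ) (d : n → ℝ), Pᵀ * A * P = 1 ∧ Pᵀ * B * P = diagonal d := by
  obtain ⟨Q, hQ⟩ := hA.exists_transpose_mul_mul_eq_one
  have hM : (Qᵀ * B * Q).IsHermitian := by
    simp [IsSymm, transpose_mul, hB.eq, Matrix.mul_assoc]
  set U := (hM.eigenvectorUnitary : Matrix n n ℝ)
  have hconj (N : Matrix n n ℝ) : (Q * U)ᵀ * N * (Q * U) = Uᵀ * (Qᵀ * N * Q) * U := by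
    simp only [transpose_mul, Matrix.mul_assoc]
  refine ⟨Q * U, hM.eigenvalues, ?_, ?_⟩
  · rw [hconj, hQ, Matrix.mul_one, hM.transpose_eigenvectorUnitary_mul_self]
  · rw [hconj, hM.transpose_eigenvectorUnitary_mul_mul]

end Matrix

theorem weierstrass_simultaneous_diagonalization
    {n : Type*} [Fintype n] [DecidableEq n]
    (A B : Matrix n n ℝ) (hA : A.PosDef) (hB : B.IsSymm) :
    ∃ (P : Matrix n n ℝ) (d : n → ℝ), IsUnit P.det ∧
      Pᵀ * A * P = 1 ∧ Pᵀ * B * P = Matrix.diagonal d ∧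
      ∀ i, (Matrix.det ((X : ℝ[X]) • A.map C - B.map C)).IsRoot (d i) := by
  obtain ⟨P, d, hPA, hPB⟩ := hA.exists_simultaneous_diagonalization hB
  refine ⟨P, d, isUnit_det_of_left_inverse hPA, hPA, hPB, fun i ↦ ?_⟩
  rw [IsRoot, eval_det_X_smul_map_C_sub_map_C, det_smul_sub_eq_zero_of_transpose_mul_mul hPA hPB]
end

section
/- Let n be a finite type with decidable equality, A, B : Matrix n n ℝ with A positive definite and B symmetric, and let p := det(X • A.map C − B.map C) ∈ ℝ[X] be the pencil polynomial. Then every complex root of p is real: for all z : ℂ, if Polynomial.aeval z p = 0 then z.im = 0. (Weierstrass 1858: the determinant of s·Φ − Ψ, for Φ a definite real quadratic form and Ψ a real quadratic form, vanishes only at real values of s.) -/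
/-!
If `z` is a root of the pencil polynomial, then `det (z A - B) = 0`, so `(z A - B) v = 0` for
some nonzero `v : n → ℂ`. Pairing with `v` gives `z (v* A v) = v* B v`, where `v* B v` is real
because `B` is Hermitian, and `v* A v` is real and positive because `A` is positive definite
(its real part is `xᵀ A x + yᵀ A y` for `v = x + i y`). Hence `z` is real.
-/

open Polynomial Matrix
open scoped ComplexOrder

namespace Matrix

variable {n : Type*}

theorem IsHermitian.map_algebraMap_real {𝕜 : Type*} [RCLike 𝕜] {A : Matrix n n ℝ}
    (hA : A.IsHermitian) : (A.map (algebraMap ℝ 𝕜)).IsHermitian :=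
  hA.map _ fun x ↦ (RCLike.conj_ofReal x).symm

variable [Fintype n]

theorem aeval_det_X_smul_sub [DecidableEq n] {R S : Type*} [CommRing R] [CommRing S]
    [Algebra R S] (A B : Matrix n n R) (s : S) :
    aeval s ((X : R[X]) • A.map C - B.map C).det
      = (s • A.map (algebraMap R S) - B.map (algebraMap R S)).det := by
  rw [AlgHom.map_det]
  congr 1
  ext i j
  simp [Algebra.commutes]

theorem im_eq_zero_of_det_smul_sub_eq_zero [DecidableEq n] {𝕜 : Type*} [RCLike 𝕜]
    {A B : Matrix n n 𝕜} (hA : A.PosDef) (hB : B.IsHermitian) {z : 𝕜}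
    (hz : (z • A - B).det = 0) : RCLike.im z = 0 := by
  obtain ⟨v, hv, hzv⟩ := exists_mulVec_eq_zero_iff.mpr hz
  have hpos := RCLike.pos_iff.mp (hA.dotProduct_mulVec_pos hv)
  have hBv := hB.im_star_dotProduct_mulVec_self v
  have heq : z * (star v ⬝ᵥ A *ᵥ v) = star v ⬝ᵥ B *ᵥ v := by
    rw [sub_mulVec, smul_mulVec, sub_eq_zero] at hzv
    rw [← hzv, dotProduct_smul, smul_eq_mul]
  have := congrArg RCLike.im heq
  rw [RCLike.mul_im, hpos.2, hBv, mul_zero, zero_add] at this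
  exact (mul_eq_zero.mp this).resolve_right hpos.1.ne'

theorem re_star_dotProduct_map_algebraMap_mulVec {𝕜 : Type*} [RCLike 𝕜] (A : Matrix n n ℝ)
    (v : n → 𝕜) :
    RCLike.re (star v ⬝ᵥ A.map (algebraMap ℝ 𝕜) *ᵥ v) =
      (fun i ↦ RCLike.re (v i)) ⬝ᵥ A *ᵥ (fun i ↦ RCLike.re (v i)) +
      (fun i ↦ RCLike.im (v i)) ⬝ᵥ A *ᵥ (fun i ↦ RCLike.im (v i)) := by
  simp only [dotProduct, mulVec, Finset.mul_sum, map_sum, ← Finset.sum_add_distrib]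
  refine Finset.sum_congr rfl fun i _ ↦ Finset.sum_congr rfl fun j _ ↦ ?_
  simp [RCLike.mul_re, RCLike.mul_im]

theorem PosDef.map_algebraMap_real {𝕜 : Type*} [RCLike 𝕜] {A : Matrix n n ℝ} (hA : A.PosDef) :
    (A.map (algebraMap ℝ 𝕜)).PosDef := by
  have hherm := hA.isHermitian.map_algebraMap_real (𝕜 := 𝕜)
  refine .of_dotProduct_mulVec_pos hherm fun v hv ↦
    RCLike.pos_iff.mpr ⟨?_, hherm.im_star_dotProduct_mulVec_self v⟩
  rw [re_star_dotProduct_map_algebraMap_mulVec]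
  set x : n → ℝ := fun i ↦ RCLike.re (v i)
  set y : n → ℝ := fun i ↦ RCLike.im (v i)
  have hx := hA.posSemidef.dotProduct_mulVec_nonneg x
  have hy := hA.posSemidef.dotProduct_mulVec_nonneg y
  simp only [star_trivial] at hx hy
  have hxy : x ≠ 0 ∨ y ≠ 0 := by
    by_contra! h
    exact hv <| funext fun i ↦
      RCLike.ext (by simpa using congrFun h.1 i) (by simpa using congrFun h.2 i)
  rcases hxy with hx0 | hy0
  · exact add_pos_of_pos_of_nonneg (by simpa using hA.dotProduct_mulVec_pos hx0) hy
  · exact add_pos_of_nonneg_of_pos hx (by simpa using hA.dotProduct_mulVec_pos hy0)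

end Matrix

theorem pencil_roots_real
    {n : Type*} [Fintype n] [DecidableEq n]
    (A B : Matrix n n ℝ) (hA : A.PosDef) (hB : B.IsSymm) :
    ∀ z : ℂ,
      Polynomial.aeval z (Matrix.det ((X : ℝ[X]) • A.map C - B.map C)) = 0 →
      z.im = 0 := by
  intro z hz
  rw [aeval_det_X_smul_sub] at hz
  exact im_eq_zero_of_det_smul_sub_eq_zero hA.map_algebraMap_real
    (isHermitian_iff_isSymm.mpr hB).map_algebraMap_real hz
end

section
/- Let n be a finite type with decidable equality and let A : Matrix n n ℝ be symmetric. Then for every μ : ℝ, the algebraic multiplicity equals the geometric multiplicity: (Matrix.charpoly A).rootMultiplicity μ = finrank ℝ (Module.End.eigenspace A.mulVecLin μ). (The property underlying Jordan's 1872 answer to Yvon-Villarceau: the quadratic character of the mechanical systems guarantees that they reduce to distinct independent equations even when characteristic roots coincide.) -/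
/-!
A real symmetric matrix is a self-adjoint operator on Euclidean space, hence semisimple. For a
semisimple endomorphism the maximal generalized eigenspace of `μ` collapses to the eigenspace,
while the dimension of the generalized eigenspace is always the multiplicity of `μ` as a root of
the characteristic polynomial.
-/

open Polynomial Matrix

theorem Module.End.IsFinitelySemisimple.finrank_eigenspace_eq_rootMultiplicity
    {K V : Type*} [Field K] [AddCommGroup V] [Module K V] [FiniteDimensional K V]
    {φ : Module.End K V} (hφ : φ.IsFinitelySemisimple) (μ : K) :
    Module.finrank K (φ.eigenspace μ) = φ.charpoly.rootMultiplicity μ := by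
  rw [← hφ.maxGenEigenspace_eq_eigenspace, LinearMap.finrank_maxGenEigenspace_eq]

theorem Matrix.IsHermitian.isSemisimple_mulVecLin {𝕜 n : Type*} [RCLike 𝕜] [Fintype n]
    [DecidableEq n] {A : Matrix n n 𝕜} (hA : A.IsHermitian) :
    Module.End.IsSemisimple A.mulVecLin :=
  (LinearEquiv.isSemisimple_iff A.toEuclideanLin A.mulVecLin
    (WithLp.linearEquiv 2 𝕜 (n → 𝕜)) rfl).mp <|
    Module.End.isFinitelySemisimple_iff_isSemisimple.mp
      (isSymmetric_toEuclideanLin_iff.mpr hA).isFinitelySemisimple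

theorem symm_algebraic_eq_geometric_multiplicity
    {n : Type*} [Fintype n] [DecidableEq n]
    (A : Matrix n n ℝ) (hA : A.IsSymm) (μ : ℝ) :
    (Matrix.charpoly A).rootMultiplicity μ =
      Module.finrank ℝ (Module.End.eigenspace A.mulVecLin μ) := by
  have hH : A.IsHermitian := isHermitian_iff_isSymm.mpr hA
  rw [hH.isSemisimple_mulVecLin.isFinitelySemisimple.finrank_eigenspace_eq_rootMultiplicity,
    charpoly_mulVecLin]
end

section
/- Let n be a finite type with decidable equality, A : Matrix n n ℝ, and suppose P, Q : Matrix n n ℝ are invertible matrices and d, e : n → ℝ are such that Pᵀ * A * P = Matrix.diagonal d and Qᵀ * A * Q = Matrix.diagonal e. Then the number of positive coefficients is the same in both diagonalizations, and likewise for negative coefficients: (Finset.univ.filter fun i => 0 < d i).card = (Finset.univ.filter fun i => 0 < e i).card and (Finset.univ.filter fun i => d i < 0).card = (Finset.univ.filter fun i => e i < 0).card. (Hermite's 1857 law of inertia: whatever real substitution is used to reduce a quadratic form to a sum of squares, the number of coefficients of a given sign is always the same.) -/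
/-!
A congruence `Pᵀ A P = diagonal d` with `P` invertible is an isometry between the weighted sum of
squares `∑ dᵢ xᵢ²` and the quadratic form `x ↦ xᵀ A x`. The number of positive (negative) weights
of a weighted sum of squares is the maximal dimension of a subspace on which it is positive
(negative) definite, and this is invariant under isometry, so it depends on `A` only.
-/

open Matrix QuadraticMap QuadraticForm

section CommRing

variable {R n : Type*} [CommRing R] [Fintype n] [DecidableEq n]

lemma Matrix.toQuadraticForm'_apply (A : Matrix n n R) (x : n → R) :
    A.toQuadraticForm' x = x ⬝ᵥ A *ᵥ x := by
  simp [toQuadraticForm', toLinearMap₂'_apply']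

lemma Matrix.toQuadraticForm'_mulVec (A P : Matrix n n R) (x : n → R) :
    A.toQuadraticForm' (P *ᵥ x) = (Pᵀ * A * P).toQuadraticForm' x := by
  simp only [toQuadraticForm'_apply, ← mulVec_mulVec, dotProduct_mulVec, vecMul_transpose]

lemma Matrix.toQuadraticForm'_diagonal (d : n → R) :
    (diagonal d).toQuadraticForm' = weightedSumSquares R d := by
  ext x
  simp only [toQuadraticForm'_apply, weightedSumSquares_apply, mulVec_diagonal, dotProduct,
    smul_eq_mul]
  exact Finset.sum_congr rfl fun i _ => by ring

lemma Matrix.toQuadraticForm'_equivalent_of_congr_diagonal {A P : Matrix n n R} {d : n → R}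
    (hP : IsUnit P.det) (hd : Pᵀ * A * P = diagonal d) :
    A.toQuadraticForm'.Equivalent (weightedSumSquares R d) := by
  let := P.invertibleOfIsUnitDet hP
  refine Equivalent.symm ⟨{ P.toLinearEquiv' this with map_app' := fun x => ?_ }⟩
  change A.toQuadraticForm' (P *ᵥ x) = _
  rw [toQuadraticForm'_mulVec, hd, toQuadraticForm'_diagonal]

end CommRing

section LinearOrderedField

variable {𝕜 n : Type*} [Field 𝕜] [LinearOrder 𝕜] [IsStrictOrderedRing 𝕜]
  [Fintype n] [DecidableEq n] {A P : Matrix n n 𝕜} {d : n → 𝕜}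

lemma Matrix.card_filter_pos_eq_sigPos_of_congr_diagonal (hP : IsUnit P.det)
    (hd : Pᵀ * A * P = diagonal d) :
    (Finset.univ.filter fun i => 0 < d i).card = sigPos A.toQuadraticForm' := by
  rw [sigPos_of_equiv_weightedSumSquares (toQuadraticForm'_equivalent_of_congr_diagonal hP hd),
    Set.ncard_eq_toFinset_card', Set.toFinset_ofPred]

lemma Matrix.card_filter_neg_eq_sigNeg_of_congr_diagonal (hP : IsUnit P.det)
    (hd : Pᵀ * A * P = diagonal d) :
    (Finset.univ.filter fun i => d i < 0).card = sigNeg A.toQuadraticForm' := by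
  rw [sigNeg_of_equiv_weightedSumSquares (toQuadraticForm'_equivalent_of_congr_diagonal hP hd),
    Set.ncard_eq_toFinset_card', Set.toFinset_ofPred]

end LinearOrderedField

theorem law_of_inertia
    {n : Type*} [Fintype n] [DecidableEq n]
    (A : Matrix n n ℝ) (P Q : Matrix n n ℝ) (d e : n → ℝ)
    (hP : IsUnit P.det) (hQ : IsUnit Q.det)
    (hd : Pᵀ * A * P = Matrix.diagonal d)
    (he : Qᵀ * A * Q = Matrix.diagonal e) :
    (Finset.univ.filter fun i => 0 < d i).card =
      (Finset.univ.filter fun i => 0 < e i).card ∧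
    (Finset.univ.filter fun i => d i < 0).card =
      (Finset.univ.filter fun i => e i < 0).card :=
  ⟨(card_filter_pos_eq_sigPos_of_congr_diagonal hP hd).trans
      (card_filter_pos_eq_sigPos_of_congr_diagonal hQ he).symm,
    (card_filter_neg_eq_sigNeg_of_congr_diagonal hP hd).trans
      (card_filter_neg_eq_sigNeg_of_congr_diagonal hQ he).symm⟩
end

section
/- Let A : Matrix (Fin n) (Fin n) ℝ be symmetric, and for 0 ≤ k ≤ n let Δ k denote the k-th leading principal minor of A, with Δ 0 = 1. Assume Δ k ≠ 0 for all k with 1 ≤ k ≤ n. Then there exists a lower unitriangular matrix L : Matrix (Fin n) (Fin n) ℝ (i.e., L i i = 1 for all i and L i j = 0 whenever i < j) such that A = L * Matrix.diagonal (fun k => Δ (k+1) / Δ k) * Lᵀ. (The Hermite–Jacobi reduction used by Darboux in 1874: f = Δ_{n−1}X₁² + (Δ_{n−2}/Δ_{n−1})X₂² + ⋯ + (Δ/Δ₁)Xₙ², a sum of squares whose coefficients are ratios of successive leading principal minors.) -/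
/-!
A symmetric matrix whose proper leading principal minors are nonzero factors as `L D Lᵀ` with
`L` unit lower triangular, by bordering: if the leading `n × n` block is `L₁ D₁ L₁ᵀ`, the last
row `w` of `L` solves `(L₁ D₁) w = b` for the last column `b`, which is possible since
`det (L₁ D₁) = Δₙ ≠ 0`, and the last pivot is the Schur complement `c - wᵀ D₁ w`.
Since `L` is lower triangular, the leading `k × k` block of `L D Lᵀ` is `L_k D_k L_kᵀ`, so
`Δ_k = d₀ ⋯ d_{k-1}`, which forces `d_k = Δ_{k+1} / Δ_k`.
-/

open Matrix

namespace Matrix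

variable {R : Type*} {n k : ℕ}

theorem submatrix_castLE_mul_of_isLowerTriangular [NonUnitalNonAssocSemiring R]
    {L : Matrix (Fin n) (Fin n) R} (hL : L.IsLowerTriangular) (M : Matrix (Fin n) (Fin n) R)
    (h : k ≤ n) :
    (L * M).submatrix (Fin.castLE h) (Fin.castLE h) =
      L.submatrix (Fin.castLE h) (Fin.castLE h) * M.submatrix (Fin.castLE h) (Fin.castLE h) := by
  ext i j
  refine (Fintype.sum_of_injective _ (Fin.castLE_injective h) _ _ (fun l hl => ?_)
    fun _ => rfl).symm
  have hil : Fin.castLE h i < l := by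
    by_contra! hli
    exact hl ⟨⟨l, (Fin.le_def.1 hli).trans_lt i.2⟩, rfl⟩
  exact mul_eq_zero_of_left (hL hil) _

theorem submatrix_castLE_mul_of_isUpperTriangular [NonUnitalCommSemiring R]
    (M : Matrix (Fin n) (Fin n) R) {U : Matrix (Fin n) (Fin n) R} (hU : U.IsUpperTriangular)
    (h : k ≤ n) :
    (M * U).submatrix (Fin.castLE h) (Fin.castLE h) =
      M.submatrix (Fin.castLE h) (Fin.castLE h) * U.submatrix (Fin.castLE h) (Fin.castLE h) := by
  rw [← transpose_inj, transpose_submatrix, transpose_mul, transpose_mul,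
    submatrix_castLE_mul_of_isLowerTriangular hU.transpose, transpose_submatrix,
    transpose_submatrix]

theorem det_mul_diagonal_mul_transpose_of_isLowerTriangular [CommRing R] {m : Type*} [Fintype m]
    [LinearOrder m] {L : Matrix m m R} (hL : L.IsLowerTriangular) (hL₁ : ∀ i, L i i = 1)
    (d : m → R) : (L * diagonal d * Lᵀ).det = ∏ i, d i := by
  simp [det_mul, det_transpose, det_of_isLowerTriangular L hL, hL₁]

theorem det_submatrix_castLE_mul_diagonal_mul_transpose [CommRing R]
    {L : Matrix (Fin n) (Fin n) R} (hL : L.IsLowerTriangular) (hL₁ : ∀ i, L i i = 1)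
    (d : Fin n → R) (h : k ≤ n) :
    ((L * diagonal d * Lᵀ).submatrix (Fin.castLE h) (Fin.castLE h)).det =
      ∏ i : Fin k, d (Fin.castLE h i) := by
  rw [submatrix_castLE_mul_of_isUpperTriangular _ hL.transpose,
    submatrix_castLE_mul_of_isLowerTriangular hL, submatrix_diagonal _ _ (Fin.castLE_injective h),
    ← transpose_submatrix]
  exact det_mul_diagonal_mul_transpose_of_isLowerTriangular
    (L := L.submatrix (Fin.castLE h) (Fin.castLE h)) (fun i j hij => hL hij) (fun i => hL₁ _) _

theorem mul_diagonal_mul_transpose_apply [NonUnitalNonAssocSemiring R] {m : Type*} [Fintype m]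
    [DecidableEq m] (L : Matrix m m R) (d : m → R) (i j : m) :
    (L * diagonal d * Lᵀ) i j = ∑ l, L i l * d l * L j l := by
  rw [mul_apply]
  simp only [mul_diagonal, transpose_apply]

/-- The bordered matrix `[[L, 0], [wᵀ, 1]]`. -/
def borderLower [Zero R] [One R] (L : Matrix (Fin n) (Fin n) R) (w : Fin n → R) :
    Matrix (Fin (n + 1)) (Fin (n + 1)) R :=
  of (Fin.snoc (α := fun _ => Fin (n + 1) → R) (fun i => Fin.snoc (L i) 0) (Fin.snoc w 1))

section borderLower

variable [Zero R] [One R] (L : Matrix (Fin n) (Fin n) R) (w : Fin n → R)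

@[simp] theorem borderLower_castSucc_castSucc (i j : Fin n) :
    borderLower L w i.castSucc j.castSucc = L i j := by simp [borderLower]

@[simp] theorem borderLower_castSucc_last (i : Fin n) :
    borderLower L w i.castSucc (Fin.last n) = 0 := by simp [borderLower]

@[simp] theorem borderLower_last_castSucc (j : Fin n) :
    borderLower L w (Fin.last n) j.castSucc = w j := by simp [borderLower]

@[simp] theorem borderLower_last_last : borderLower L w (Fin.last n) (Fin.last n) = 1 := by
  simp [borderLower]

variable {L}

theorem IsLowerTriangular.borderLower (hL : L.IsLowerTriangular) :
    (borderLower L w).IsLowerTriangular := by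
  intro i j hij
  rw [OrderDual.toDual_lt_toDual] at hij
  cases i using Fin.lastCases with
  | last => exact absurd hij (Fin.le_last j).not_gt
  | cast i =>
    cases j using Fin.lastCases with
    | last => simp
    | cast j => simpa using hL (Fin.castSucc_lt_castSucc_iff.1 hij)

theorem borderLower_apply_self (hL₁ : ∀ i, L i i = 1) (i : Fin (n + 1)) :
    borderLower L w i i = 1 := by
  cases i using Fin.lastCases <;> simp [hL₁]

end borderLower

theorem eq_borderLower_mul_diagonal_mul_transpose [CommRing R]
    {A : Matrix (Fin (n + 1)) (Fin (n + 1)) R} (hA : A.IsSymm) {L : Matrix (Fin n) (Fin n) R}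
    {d : Fin n → R} (hA₁ : A.submatrix Fin.castSucc Fin.castSucc = L * diagonal d * Lᵀ)
    {w : Fin n → R} (hw : (L * diagonal d) *ᵥ w = fun i => A i.castSucc (Fin.last n)) :
    A = borderLower L w *
      diagonal (Fin.snoc d (A (Fin.last n) (Fin.last n) - ∑ l, w l * d l * w l)) *
        (borderLower L w)ᵀ := by
  have hw' (i : Fin n) : ∑ l, L i l * d l * w l = A i.castSucc (Fin.last n) := by
    simpa [mulVec, dotProduct] using congrFun hw i
  ext i j
  rw [mul_diagonal_mul_transpose_apply, Fin.sum_univ_castSucc]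
  cases i using Fin.lastCases with
  | last =>
    cases j using Fin.lastCases with
    | last => simp
    | cast j =>
      rw [← hA.apply, ← hw']
      simpa using Finset.sum_congr rfl fun l _ => by ring
  | cast i =>
    cases j using Fin.lastCases with
    | last => simp [hw']
    | cast j => simpa [mul_diagonal_mul_transpose_apply] using congrFun (congrFun hA₁ i) j

theorem IsSymm.exists_eq_mul_diagonal_mul_transpose {K : Type*} [Field K] :
    ∀ {n : ℕ} {A : Matrix (Fin n) (Fin n) K}, A.IsSymm →
      (∀ (k : ℕ) (hk : k < n), (A.submatrix (Fin.castLE hk.le) (Fin.castLE hk.le)).det ≠ 0) →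
      ∃ (L : Matrix (Fin n) (Fin n) K) (d : Fin n → K),
        L.IsLowerTriangular ∧ (∀ i, L i i = 1) ∧ A = L * diagonal d * Lᵀ
  | 0, _, _, _ => ⟨1, 0, blockTriangular_one, fun i => i.elim0, Subsingleton.elim _ _⟩
  | n + 1, A, hA, hminor => by
    obtain ⟨L, d, hL, hL₁, hA₁⟩ :=
      (hA.submatrix Fin.castSucc).exists_eq_mul_diagonal_mul_transpose
        fun k hk => hminor k (by omega)
    have hdet : (L * diagonal d).det ≠ 0 := by
      have hA₁det : (A.submatrix Fin.castSucc Fin.castSucc).det = (L * diagonal d).det := by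
        simp [hA₁, det_mul_diagonal_mul_transpose_of_isLowerTriangular hL hL₁,
          det_of_isLowerTriangular L hL, hL₁]
      exact hA₁det ▸ hminor n n.lt_succ_self
    obtain ⟨w, hw⟩ := mulVec_surjective_iff_isUnit.2 ((isUnit_iff_isUnit_det _).2 hdet.isUnit)
      fun i => A i.castSucc (Fin.last n)
    exact ⟨borderLower L w, _, hL.borderLower w, borderLower_apply_self w hL₁,
      eq_borderLower_mul_diagonal_mul_transpose hA hA₁ hw⟩

end Matrix

theorem hermite_jacobi_reduction
    {n : ℕ} (A : Matrix (Fin n) (Fin n) ℝ) (hA : A.IsSymm)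
    (Δ : ℕ → ℝ)
    (hΔ : ∀ (k : ℕ) (h : k ≤ n),
      Δ k = (A.submatrix (Fin.castLE h) (Fin.castLE h)).det)
    (hne : ∀ k : ℕ, 1 ≤ k → k ≤ n → Δ k ≠ 0) :
    ∃ L : Matrix (Fin n) (Fin n) ℝ,
      (∀ i, L i i = 1) ∧ (∀ i j : Fin n, i < j → L i j = 0) ∧
      A = L * Matrix.diagonal (fun k : Fin n => Δ ((k : ℕ) + 1) / Δ (k : ℕ)) * Lᵀ := by
  have hΔ_ne (k : ℕ) (hk : k < n) : Δ k ≠ 0 := by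
    rcases k.eq_zero_or_pos with rfl | hk₀
    · simp [hΔ 0 n.zero_le]
    · exact hne k hk₀ hk.le
  obtain ⟨L, d, hL, hL₁, hA⟩ := hA.exists_eq_mul_diagonal_mul_transpose fun k hk => by
    simpa [← hΔ] using hΔ_ne k hk
  have hd (k : Fin n) : d k = Δ (k + 1) / Δ k := by
    have hsucc : Δ (k + 1) = Δ k * d k := by
      rw [hΔ _ k.2, hΔ _ k.2.le, hA, det_submatrix_castLE_mul_diagonal_mul_transpose hL hL₁,
        det_submatrix_castLE_mul_diagonal_mul_transpose hL hL₁, Fin.prod_univ_castSucc]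
      rfl
    rw [hsucc, mul_div_cancel_left₀ _ (hΔ_ne k k.2)]
  exact ⟨L, hL₁, fun i j hij => hL hij, funext hd ▸ hA⟩
end

section
/- Let A : Matrix (Fin n) (Fin n) ℝ be symmetric, and for 0 ≤ k ≤ n let Δ k denote the k-th leading principal minor of A, with Δ 0 = 1. Assume Δ k ≠ 0 for all k with 1 ≤ k ≤ n. Then for every invertible Q : Matrix (Fin n) (Fin n) ℝ and e : Fin n → ℝ with Qᵀ * A * Q = Matrix.diagonal e, the number of positive diagonal coefficients equals the number of sign agreements in the sequence of minors: (Finset.univ.filter fun i => 0 < e i).card = (Finset.univ.filter fun k : Fin n => 0 < Δ k * Δ (k+1)).card. (Darboux 1874, following Jacobi and Borchardt: the number of positive squares of the form equals the number of 'permanences' of the sequence Δ, Δ₁, …, Δ_{n−1}, 1.) -/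
/-!
Completing the square block by block (the Schur complement) shows that a symmetric matrix whose
leading principal minors `Δ 0 = 1, Δ 1, …, Δ (n-1)` are nonzero is congruent to the diagonal
matrix with entries `Δ (k+1) / Δ k` (Jacobi). By Sylvester's law of inertia every diagonal matrix
congruent to `A` has the same number of positive entries, and `Δ (k+1) / Δ k > 0` exactly when
`Δ k` and `Δ (k+1)` have the same sign.
-/

open Matrix

namespace Matrix

section Congruence

variable {R : Type*} [CommRing R] {m n o : Type*} [Fintype m] [Fintype n] [Fintype o]
  [DecidableEq m] [DecidableEq n] [DecidableEq o]

def IsCongruent (A B : Matrix n n R) : Prop :=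
  ∃ P : Matrix n n R, IsUnit P.det ∧ Pᵀ * A * P = B

namespace IsCongruent

theorem refl (A : Matrix n n R) : IsCongruent A A :=
  ⟨1, by simp, by simp⟩

theorem symm {A B : Matrix n n R} (h : IsCongruent A B) : IsCongruent B A := by
  obtain ⟨P, hP, rfl⟩ := h
  refine ⟨P⁻¹, isUnit_nonsing_inv_det P hP, ?_⟩
  have hPt : IsUnit Pᵀ.det := by rwa [det_transpose]
  rw [transpose_nonsing_inv, Matrix.mul_assoc, Matrix.mul_assoc, mul_nonsing_inv _ hP,
    Matrix.mul_one, nonsing_inv_mul_cancel_left _ _ hPt]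

theorem trans {A B C : Matrix n n R} (hAB : IsCongruent A B) (hBC : IsCongruent B C) :
    IsCongruent A C := by
  obtain ⟨P, hP, rfl⟩ := hAB
  obtain ⟨P', hP', rfl⟩ := hBC
  refine ⟨P * P', by rw [det_mul]; exact hP.mul hP', ?_⟩
  simp only [transpose_mul, Matrix.mul_assoc]

theorem submatrix {A B : Matrix n n R} (h : IsCongruent A B) (e : m ≃ n) :
    IsCongruent (A.submatrix e e) (B.submatrix e e) := by
  obtain ⟨P, hP, rfl⟩ := h
  refine ⟨P.submatrix e e, by rwa [det_submatrix_equiv_self], ?_⟩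
  rw [transpose_submatrix, submatrix_mul_equiv, submatrix_mul_equiv]

theorem fromBlocks {A₁ B₁ : Matrix m m R} {A₂ B₂ : Matrix o o R}
    (h₁ : IsCongruent A₁ B₁) (h₂ : IsCongruent A₂ B₂) :
    IsCongruent (Matrix.fromBlocks A₁ 0 0 A₂) (Matrix.fromBlocks B₁ 0 0 B₂) := by
  obtain ⟨P₁, hP₁, rfl⟩ := h₁
  obtain ⟨P₂, hP₂, rfl⟩ := h₂
  refine ⟨Matrix.fromBlocks P₁ 0 0 P₂, ?_, ?_⟩
  · rw [det_fromBlocks_zero₂₁]; exact hP₁.mul hP₂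
  · simp [fromBlocks_transpose, fromBlocks_multiply]

end IsCongruent

theorem isCongruent_fromBlocks_schur (A : Matrix m m R) (B : Matrix m o R) (D : Matrix o o R)
    (hA : A.IsSymm) [Invertible A] :
    IsCongruent (Matrix.fromBlocks A B Bᵀ D) (Matrix.fromBlocks A 0 0 (D - Bᵀ * ⅟A * B)) := by
  refine ⟨Matrix.fromBlocks 1 (-(⅟A * B)) 0 1, by simp, ?_⟩
  have hinv : A⁻¹ᵀ = A⁻¹ := by rw [transpose_nonsing_inv, hA.eq]
  simp [fromBlocks_transpose, fromBlocks_multiply, Matrix.mul_assoc, hinv, neg_add_eq_sub]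

end Congruence

theorem eq_diagonal_det {R : Type*} [CommRing R] {ι : Type*} [Unique ι] [DecidableEq ι]
    (S : Matrix ι ι R) : S = diagonal fun _ => S.det := by
  ext i j
  rw [diagonal_unique, det_unique, of_apply, Subsingleton.elim i default,
    Subsingleton.elim j default]

theorem isCongruent_diagonal_div_leadingMinors {K : Type*} [Field K] {n : ℕ}
    (A : Matrix (Fin n) (Fin n) K) (hA : A.IsSymm) (Δ : ℕ → K)
    (hΔ : ∀ (k : ℕ) (h : k ≤ n), Δ k = (A.submatrix (Fin.castLE h) (Fin.castLE h)).det)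
    (hne : ∀ k < n, Δ k ≠ 0) :
    IsCongruent A (diagonal fun k : Fin n => Δ (k + 1) / Δ k) := by
  induction n with
  | zero => rw [Subsingleton.elim A (diagonal _)]; exact .refl _
  | succ n ih =>
    let e : Fin n ⊕ Fin 1 ≃ Fin (n + 1) := finSumFinEquiv
    let M := A.submatrix e e
    let A' := M.toBlocks₁₁
    have hMsymm : (fromBlocks A' M.toBlocks₁₂ M.toBlocks₂₁ M.toBlocks₂₂).IsSymm := by
      rw [fromBlocks_toBlocks]; exact hA.submatrix e
    obtain ⟨hA', hB, -, -⟩ := isSymm_fromBlocks_iff.mp hMsymm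
    have hM : M = fromBlocks A' M.toBlocks₁₂ M.toBlocks₁₂ᵀ M.toBlocks₂₂ := by
      rw [hB, fromBlocks_toBlocks]
    have hΔ' : ∀ (k : ℕ) (h : k ≤ n), Δ k = (A'.submatrix (Fin.castLE h) (Fin.castLE h)).det :=
      fun k h => hΔ k (h.trans n.le_succ)
    have hdetA' : A'.det = Δ n := by simpa using (hΔ' n le_rfl).symm
    have hdetM : M.det = Δ (n + 1) := by simpa [M] using (hΔ (n + 1) le_rfl).symm
    have hΔn : Δ n ≠ 0 := hne n n.lt_succ_self
    let : Invertible A' := A'.invertibleOfIsUnitDet (isUnit_iff_ne_zero.mpr (hdetA' ▸ hΔn))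
    set S := M.toBlocks₂₂ - M.toBlocks₁₂ᵀ * ⅟A' * M.toBlocks₁₂ with hS
    have hS_diag : S = diagonal fun _ => Δ (n + 1) / Δ n := by
      have hdetS : S.det = Δ (n + 1) / Δ n := by
        rw [eq_div_iff hΔn, ← hdetA', ← hdetM, hM, det_fromBlocks₁₁, ← hS, mul_comm]
      rw [← hdetS]
      exact eq_diagonal_det S
    have hMdiag : IsCongruent M (diagonal (Sum.elim (fun k : Fin n => Δ (k + 1) / Δ k)
        fun _ => Δ (n + 1) / Δ n)) := by
      rw [← fromBlocks_diagonal, ← hS_diag]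
      conv_lhs => rw [hM]
      exact (isCongruent_fromBlocks_schur _ _ _ hA').trans
        ((ih A' hA' hΔ' fun k hk => hne k (hk.trans n.lt_succ_self)).fromBlocks (.refl _))
    convert hMdiag.submatrix e.symm using 1
    · simp [M]
    · rw [submatrix_diagonal_equiv]
      congr 1
      funext k
      induction k using Fin.lastCases <;> simp [e]

section Inertia

variable {ι : Type*} [Fintype ι] [DecidableEq ι]

theorem dotProduct_diagonal_mulVec_self {R : Type*} [CommSemiring R] (d x : ι → R) :
    x ⬝ᵥ (diagonal d *ᵥ x) = ∑ i, d i * x i ^ 2 := by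
  simp only [dotProduct, mulVec_diagonal]
  exact Finset.sum_congr rfl fun i _ => by ring

variable {K : Type*} [Field K] [LinearOrder K] [IsStrictOrderedRing K]

/-- A nonzero `x` supported where `e > 0` with `S *ᵥ x` vanishing where `d > 0` exists by a dimension
count; the two sides of `xᵀ (diagonal e) x = (S x)ᵀ (diagonal d) (S x)` are then `> 0` and `≤ 0`. -/
theorem card_pos_le_of_transpose_mul_diagonal_mul (S : Matrix ι ι K) (d e : ι → K)
    (h : Sᵀ * diagonal d * S = diagonal e) :
    (Finset.univ.filter fun i => 0 < e i).card ≤ (Finset.univ.filter fun i => 0 < d i).card := by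
  by_contra! hlt
  let f : (ι → K) →ₗ[K] ({i // ¬ 0 < e i} → K) × ({i // 0 < d i} → K) :=
    (LinearMap.funLeft K K Subtype.val).prod (LinearMap.funLeft K K Subtype.val ∘ₗ S.mulVecLin)
  have hf : LinearMap.ker f ≠ ⊥ := by
    refine LinearMap.ker_ne_bot_of_finrank_lt ?_
    simp only [Module.finrank_prod, Module.finrank_fintype_fun_eq_card, Fintype.card_subtype]
    have := Finset.card_filter_add_card_filter_not (s := Finset.univ) (fun i => 0 < e i)
    simp only [Finset.card_univ] at this
    omega
  obtain ⟨x, hx, hx0⟩ := Submodule.ne_bot_iff _ |>.mp hf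
  have hxe : ∀ i, ¬ 0 < e i → x i = 0 := fun i hi => congrFun (congrArg Prod.fst hx) ⟨i, hi⟩
  have hSx : ∀ i, 0 < d i → (S *ᵥ x) i = 0 := fun i hi => congrFun (congrArg Prod.snd hx) ⟨i, hi⟩
  have hq : ∑ i, e i * x i ^ 2 = ∑ i, d i * (S *ᵥ x) i ^ 2 := by
    rw [← dotProduct_diagonal_mulVec_self, ← dotProduct_diagonal_mulVec_self, ← h,
      ← mulVec_mulVec, ← mulVec_mulVec, dotProduct_mulVec, vecMul_transpose]
  obtain ⟨j, hj⟩ := Function.ne_iff.mp hx0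
  have hpos : 0 < ∑ i, e i * x i ^ 2 := by
    refine Finset.sum_pos' (fun i _ => ?_) ⟨j, Finset.mem_univ j, ?_⟩
    · by_cases hi : 0 < e i
      · positivity
      · simp [hxe i hi]
    · have hej : 0 < e j := by_contra fun hej => hj (hxe j hej)
      exact mul_pos hej (sq_pos_of_ne_zero hj)
  have hnonpos : ∑ i, d i * (S *ᵥ x) i ^ 2 ≤ 0 := by
    refine Finset.sum_nonpos fun i _ => ?_
    by_cases hi : 0 < d i
    · simp [hSx i hi]
    · exact mul_nonpos_of_nonpos_of_nonneg (not_lt.mp hi) (sq_nonneg _)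
  linarith

theorem IsCongruent.card_pos_diagonal_eq {d e : ι → K} (h : IsCongruent (diagonal d) (diagonal e)) :
    (Finset.univ.filter fun i => 0 < d i).card = (Finset.univ.filter fun i => 0 < e i).card := by
  obtain ⟨Q, -, hQ⟩ := h.symm
  obtain ⟨P, -, hP⟩ := h
  exact le_antisymm (card_pos_le_of_transpose_mul_diagonal_mul Q e d hQ)
    (card_pos_le_of_transpose_mul_diagonal_mul P d e hP)

end Inertia

end Matrix

theorem darboux_permanences
    {n : ℕ} (A : Matrix (Fin n) (Fin n) ℝ) (hA : A.IsSymm)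
    (Δ : ℕ → ℝ)
    (hΔ : ∀ (k : ℕ) (h : k ≤ n),
      Δ k = (A.submatrix (Fin.castLE h) (Fin.castLE h)).det)
    (hne : ∀ k : ℕ, 1 ≤ k → k ≤ n → Δ k ≠ 0) :
    ∀ (Q : Matrix (Fin n) (Fin n) ℝ) (e : Fin n → ℝ), IsUnit Q.det →
      Qᵀ * A * Q = Matrix.diagonal e →
      (Finset.univ.filter fun i => 0 < e i).card =
        (Finset.univ.filter fun k : Fin n => 0 < Δ (k : ℕ) * Δ ((k : ℕ) + 1)).card := by
  intro Q e hQ hQA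
  have hΔ_ne : ∀ k < n, Δ k ≠ 0 := by
    intro k hk
    rcases Nat.eq_zero_or_pos k with rfl | hk₀
    · simp [hΔ 0 (Nat.zero_le n)]
    · exact hne k hk₀ hk.le
  have hJacobi : IsCongruent (diagonal e) (diagonal fun k : Fin n => Δ (k + 1) / Δ k) :=
    IsCongruent.symm ⟨Q, hQ, hQA⟩ |>.trans
      (isCongruent_diagonal_div_leadingMinors A hA Δ hΔ hΔ_ne)
  rw [hJacobi.card_pos_diagonal_eq]
  refine congrArg Finset.card (Finset.filter_congr fun k _ => ?_)
  rw [div_pos_iff, mul_pos_iff]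
  tauto
end

section
/- Let K be a field, n a finite type with decidable equality, and A, B : Matrix n n K. Then A and B are similar — i.e., there exists P : Matrix n n K with IsUnit P.det and A * P = P * B — if and only if their characteristic matrices are equivalent over K[X]: there exist U, V : Matrix n n (Polynomial K) with IsUnit U.det and IsUnit V.det such that charmatrix A = U * (charmatrix B) * V. (The content of Weierstrass's 1868 elementary divisor theorem: the invariant factors of the characteristic matrix form a complete system of invariants for similarity.) -/
/-!
Over a noncommutative ring, right evaluation `f ↦ f.eval b` (the remainder of `f` on right division
by `X - C b`) is not multiplicative, but it is along an intertwiner: if `f.eval b * b = a * f.eval b`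
then `(g * f).eval b = g.eval a * f.eval b`. Given `X - C a = u * (X - C b) * v` with `u`, `v`
units, evaluating `(X - C a) * v⁻¹ = u * (X - C b)` at `b` shows that `p := v⁻¹.eval b` satisfies
`p * b = a * p`, and symmetrically `q := v.eval a` satisfies `q * a = b * q`; evaluating
`v⁻¹ * v = 1` and `v * v⁻¹ = 1` then gives `p * q = 1 = q * p`. For matrices, `matPolyEquiv`
turns the characteristic matrix of `A` into `X - C A`.
-/

open Polynomial Matrix

namespace Polynomial

section Semiring

variable {R : Type*} [Semiring R]

theorem eval_mul_of_semiconjBy {a b : R} {f : R[X]} (h : SemiconjBy (f.eval b) b a)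
    (g : R[X]) : (g * f).eval b = g.eval a * f.eval b := by
  induction g using Polynomial.induction_on' with
  | add g₁ g₂ h₁ h₂ => rw [add_mul, eval_add, eval_add, h₁, h₂, add_mul]
  | monomial j c =>
    rw [eval_monomial, ← C_mul_X_pow_eq_monomial, mul_assoc, eval_C_mul, X_pow_mul,
      eval_mul_X_pow, (h.pow_right j).eq, mul_assoc]

end Semiring

section Ring

variable {R : Type*} [Ring R]

theorem eval_X_sub_C_mul (a b : R) (f : R[X]) :
    ((X - C a) * f).eval b = f.eval b * b - a * f.eval b := by
  rw [sub_mul, eval_sub, X_mul, eval_mul_X, eval_C_mul]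

theorem semiconjBy_eval_of_X_sub_C_mul_eq {a b : R} {f g : R[X]}
    (h : (X - C a) * f = g * (X - C b)) : SemiconjBy (f.eval b) b a := by
  have h_eval := congrArg (eval b) h
  rwa [eval_X_sub_C_mul, eval_mul_X_sub_C, sub_eq_zero] at h_eval

theorem X_sub_C_eq_C_mul_X_sub_C_mul_C {a b p q : R} (hpq : p * q = 1) (h : a * p = p * b) :
    X - C a = C p * (X - C b) * C q := by
  rw [mul_sub, sub_mul, ← (commute_X (C p)).eq, mul_assoc, ← C_mul, hpq, C_1, mul_one,
    ← C_mul, ← h, ← C_mul, mul_assoc, hpq, mul_one]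

theorem exists_isUnit_semiconj_of_X_sub_C_eq {a b : R} {u v : R[X]} (hu : IsUnit u)
    (hv : IsUnit v) (h : X - C a = u * (X - C b) * v) : ∃ p : R, IsUnit p ∧ a * p = p * b := by
  obtain ⟨u, rfl⟩ := hu
  obtain ⟨v, rfl⟩ := hv
  have hp : SemiconjBy ((↑v⁻¹ : R[X]).eval b) b a :=
    semiconjBy_eval_of_X_sub_C_mul_eq (g := u) (by rw [h, Units.mul_inv_cancel_right])
  have hq : SemiconjBy ((v : R[X]).eval a) a b :=
    semiconjBy_eval_of_X_sub_C_mul_eq (g := ↑u⁻¹)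
      (by rw [h, mul_assoc, Units.inv_mul_cancel_left])
  refine ⟨_, ⟨⟨(↑v⁻¹ : R[X]).eval b, (v : R[X]).eval a, ?_, ?_⟩, rfl⟩, hp.eq.symm⟩
  · rw [← eval_mul_of_semiconjBy hq, Units.inv_mul, eval_one]
  · rw [← eval_mul_of_semiconjBy hp, Units.mul_inv, eval_one]

theorem exists_isUnit_semiconj_iff_X_sub_C_equivalent (a b : R) :
    (∃ p : R, IsUnit p ∧ a * p = p * b) ↔
      ∃ u v : R[X], IsUnit u ∧ IsUnit v ∧ X - C a = u * (X - C b) * v := by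
  constructor
  · rintro ⟨_, ⟨p, rfl⟩, h⟩
    exact ⟨C ↑p, C ↑p⁻¹, p.isUnit.map C, p⁻¹.isUnit.map C,
      X_sub_C_eq_C_mul_X_sub_C_mul_C p.mul_inv h⟩
  · rintro ⟨u, v, hu, hv, h⟩
    exact exists_isUnit_semiconj_of_X_sub_C_eq hu hv h

end Ring

end Polynomial

theorem Matrix.exists_charmatrix_equivalent_iff {K : Type*} [CommRing K] {n : Type*} [Fintype n]
    [DecidableEq n] (A B : Matrix n n K) :
    (∃ U V : Matrix n n K[X], IsUnit U ∧ IsUnit V ∧ charmatrix A = U * charmatrix B * V) ↔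
      ∃ u v : (Matrix n n K)[X], IsUnit u ∧ IsUnit v ∧ X - C A = u * (X - C B) * v := by
  refine matPolyEquiv.toEquiv.exists_congr fun U => matPolyEquiv.toEquiv.exists_congr fun V => ?_
  simp only [AlgEquiv.toEquiv_eq_coe, EquivLike.coe_coe, isUnit_map_iff,
    ← matPolyEquiv_charmatrix, ← map_mul, matPolyEquiv.injective.eq_iff]

theorem similar_iff_charmatrix_equivalent
    {K : Type*} [Field K] {n : Type*} [Fintype n] [DecidableEq n]
    (A B : Matrix n n K) :
    (∃ P : Matrix n n K, IsUnit P.det ∧ A * P = P * B) ↔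
    (∃ U V : Matrix n n (Polynomial K), IsUnit U.det ∧ IsUnit V.det ∧
      charmatrix A = U * charmatrix B * V) := by
  simp only [← isUnit_iff_isUnit_det]
  rw [exists_charmatrix_equivalent_iff]
  exact exists_isUnit_semiconj_iff_X_sub_C_equivalent A B
end

section
/- Let K be a field, n a nonempty finite type with decidable equality, and A : Matrix n n K. Then the characteristic polynomial factors as the minimal polynomial times the (normalized, i.e. monic) greatest common divisor of all entries of the adjugate of the characteristic matrix: Matrix.charpoly A = minpoly K A * (Finset.univ : Finset (n × n)).gcd (fun p => (Matrix.adjugate (charmatrix A)) p.1 p.2). (The relation, implicit in Kronecker's 1874 theory of invariant factors, between the characteristic determinant, its first minors, and the last invariant factor.) -/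
/-! Write `M = charmatrix A`, `p = charpoly A`, `m = minpoly K A` and `d` for the gcd of the
entries of `adjugate M`, so that `adjugate M * M = p • 1`. As `X • 1` commutes with `A` and
`m(A) = 0`, the matrix `M = X • 1 - A` divides `m • 1`, say `m • 1 = M * N`; then
`m • adjugate M = p • N`, so `p ∣ m * d`. Conversely `p = d * q`, and cancelling `d` in
`adjugate M * M = p • 1` gives `B * M = q • 1`; substituting `A` for `X` on the right yields
`q(A) = 0`, so `m ∣ q` and `m * d ∣ p`. Both sides are monic. -/

open Polynomial Matrix

theorem Commute.sub_dvd_aeval_sub {R S : Type*} [CommSemiring R] [Ring S] [Algebra R S]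
    {x y : S} (h : Commute x y) (q : R[X]) : x - y ∣ aeval x q - aeval y q := by
  induction q using Polynomial.induction_on' with
  | add p q hp hq => simpa only [map_add, add_sub_add_comm] using dvd_add hp hq
  | monomial k a =>
    simpa only [aeval_monomial, ← Algebra.commutes, ← mul_sub]
      using (h.sub_dvd_pow_sub_pow k).mul_right (algebraMap R S a)

namespace Matrix

variable {R : Type*} [CommRing R] {n : Type*} [Fintype n] [DecidableEq n]

theorem charmatrix_dvd_smul_one_of_aeval_eq_zero {A : Matrix n n R} {q : R[X]}
    (hq : aeval A q = 0) : charmatrix A ∣ q • (1 : Matrix n n R[X]) := by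
  have hscalar : aeval (scalar n (X : R[X])) q = q • 1 := by
    change aeval (algebraMap R[X] (Matrix n n R[X]) X) q = _
    rw [aeval_algebraMap_apply, aeval_X_left_apply, Algebra.algebraMap_eq_smul_one]
  have hconst : aeval ((C : R →+* R[X]).mapMatrix A) q = 0 := by
    rw [← map_zero ((CAlgHom : R →ₐ[R] R[X]).mapMatrix (m := n)), ← hq]
    exact aeval_algHom_apply ((CAlgHom : R →ₐ[R] R[X]).mapMatrix (m := n)) A q
  simpa only [charmatrix, hscalar, hconst, sub_zero] using
    (scalar_commute (X : R[X]) (Commute.all _) ((C : R →+* R[X]).mapMatrix A)).sub_dvd_aeval_sub q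

theorem aeval_eq_zero_of_mul_charmatrix_eq_smul_one {A : Matrix n n R} {B : Matrix n n R[X]}
    {q : R[X]} (h : B * charmatrix A = q • 1) : aeval A q = 0 := by
  -- under `matPolyEquiv` the left side becomes `_ * (X - C A)`, which vanishes at `A`
  simpa only [_root_.map_mul, matPolyEquiv_charmatrix, eval_mul_X_sub_C, matPolyEquiv_smul_one,
    eval_map, ← aeval_def] using (congr_arg (fun N => (matPolyEquiv N).eval A) h).symm

theorem charpoly_dvd_mul_adjugate_charmatrix_apply {A : Matrix n n R} {q : R[X]}
    (hq : aeval A q = 0) (i j : n) : A.charpoly ∣ q * adjugate (charmatrix A) i j := by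
  obtain ⟨N, hN⟩ := charmatrix_dvd_smul_one_of_aeval_eq_zero hq
  have : q • adjugate (charmatrix A) = A.charpoly • N := by
    rw [← mul_one (adjugate _), ← mul_smul_comm, hN, ← mul_assoc, adjugate_mul, smul_mul, one_mul]
    rfl
  exact ⟨N i j, by simpa using congr_fun₂ this i j⟩

theorem dvd_det_of_forall_dvd_adjugate [Nonempty n] {M : Matrix n n R} {d : R}
    (hd : ∀ i j, d ∣ adjugate M i j) : d ∣ M.det := by
  obtain ⟨i⟩ := ‹Nonempty n›
  rw [det_eq_sum_mul_adjugate_row M i]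
  exact Finset.dvd_sum fun j _ => (hd j i).mul_left _

theorem aeval_eq_zero_of_forall_dvd_adjugate_charmatrix [IsDomain R] {A : Matrix n n R}
    {d q : R[X]} (hd : d ≠ 0) (hdq : A.charpoly = d * q)
    (hadj : ∀ i j, d ∣ adjugate (charmatrix A) i j) : aeval A q = 0 := by
  choose B hB using hadj
  have hadj_eq : adjugate (charmatrix A) = d • of B := by
    ext i j : 1
    exact hB i j
  refine aeval_eq_zero_of_mul_charmatrix_eq_smul_one (B := of B) (smul_right_injective _ hd ?_)
  change d • (of B * charmatrix A) = d • (q • 1)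
  rw [← smul_mul, ← hadj_eq, adjugate_mul, smul_smul, ← hdq]
  rfl

end Matrix

theorem charpoly_eq_minpoly_mul_gcd_adjugate
    {K : Type*} [Field K] [DecidableEq K]
    {n : Type*} [Fintype n] [DecidableEq n] [Nonempty n]
    (A : Matrix n n K) :
    Matrix.charpoly A =
      minpoly K A *
        (Finset.univ : Finset (n × n)).gcd
          (fun p => (Matrix.adjugate (charmatrix A)) p.1 p.2) := by
  set d := (Finset.univ : Finset (n × n)).gcd fun p => adjugate (charmatrix A) p.1 p.2
  have hd_dvd (i j : n) : d ∣ adjugate (charmatrix A) i j :=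
    Finset.gcd_dvd (f := fun p : n × n => adjugate (charmatrix A) p.1 p.2) (Finset.mem_univ (i, j))
  obtain ⟨q, hq⟩ : d ∣ A.charpoly := dvd_det_of_forall_dvd_adjugate hd_dvd
  have hd : d ≠ 0 := left_ne_zero_of_mul (hq ▸ A.charpoly_monic.ne_zero)
  have hmin_dvd : minpoly K A ∣ q :=
    minpoly.dvd K A (aeval_eq_zero_of_forall_dvd_adjugate_charmatrix hd hq hd_dvd)
  have hcharpoly_dvd : A.charpoly ∣ minpoly K A * d := by
    rw [← (minpoly.monic A.isIntegral).normalize_eq_self, ← Finset.gcd_mul_left]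
    exact Finset.dvd_gcd fun p _ =>
      charpoly_dvd_mul_adjugate_charmatrix_apply (minpoly.aeval K A) p.1 p.2
  have hd_monic : d.Monic := by
    simpa only [d, Finset.normalize_gcd] using monic_normalize hd
  refine eq_of_monic_of_associated A.charpoly_monic ((minpoly.monic A.isIntegral).mul hd_monic)
    (associated_of_dvd_dvd hcharpoly_dvd ?_)
  rw [hq, mul_comm d]
  exact mul_dvd_mul_right hmin_dvd d
end

section
/- Let n be a finite type with decidable equality, and let A, B : Matrix n n ℝ both be positive definite. Suppose Y, V, W : ℝ → (n → ℝ) satisfy, for all t : ℝ and i : n, HasDerivAt (fun s => Y s i) (V t i) t and HasDerivAt (fun s => V s i) (W t i) t, and for all t, A.mulVec (W t) + B.mulVec (Y t) = 0 (the equations of small oscillations). Then the trajectory is bounded: Bornology.IsBounded (Set.range Y). (Weierstrass's 1858 correction of Lagrange: the small oscillations of a quadratic mechanical system remain bounded whether or not the roots of the characteristic equation are distinct.) -/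
/-!
Along a solution of `A ÿ + B y = 0` with `A`, `B` symmetric, the energy
`ẏ ⬝ A ẏ + y ⬝ B y` has derivative `2 ẏ ⬝ (A ÿ + B y) = 0`, so it is constant. Since `A` is
positive semidefinite, `y ⬝ B y` is therefore bounded by the initial energy, and a positive definite
quadratic form dominates a multiple of `‖y‖²` (compactness of the unit sphere).
-/

open Matrix

section Calculus

variable {m n : Type*} [Fintype m] [Fintype n] {X Z : ℝ → n → ℝ} {X' Z' : n → ℝ} {t : ℝ}

theorem HasDerivAt.dotProduct (hX : HasDerivAt X X' t) (hZ : HasDerivAt Z Z' t) :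
    HasDerivAt (fun s => X s ⬝ᵥ Z s) (X' ⬝ᵥ Z t + X t ⬝ᵥ Z') t := by
  show HasDerivAt (fun s => ∑ i, X s i * Z s i) (∑ i, X' i * Z t i + ∑ i, X t i * Z' i) t
  exact (HasDerivAt.fun_sum fun i _ =>
    (hasDerivAt_pi.1 hX i).fun_mul (hasDerivAt_pi.1 hZ i)).congr_deriv Finset.sum_add_distrib

theorem HasDerivAt.matrix_mulVec (M : Matrix m n ℝ) (hX : HasDerivAt X X' t) :
    HasDerivAt (fun s => M *ᵥ X s) (M *ᵥ X') t :=
  (LinearMap.toContinuousLinearMap (mulVecLin M)).hasFDerivAt.comp_hasDerivAt t hX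

theorem Matrix.IsHermitian.dotProduct_mulVec_comm {M : Matrix n n ℝ} (hM : M.IsHermitian)
    (x y : n → ℝ) : x ⬝ᵥ M *ᵥ y = y ⬝ᵥ M *ᵥ x := by
  rw [← dotProduct_transpose_mulVec, ← conjTranspose_eq_transpose_of_trivial, hM.eq]

theorem Matrix.IsHermitian.hasDerivAt_dotProduct_mulVec_self {M : Matrix n n ℝ}
    (hM : M.IsHermitian) (hX : HasDerivAt X X' t) :
    HasDerivAt (fun s => X s ⬝ᵥ M *ᵥ X s) (2 * (X' ⬝ᵥ M *ᵥ X t)) t := by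
  convert hX.dotProduct (hX.matrix_mulVec M) using 1
  rw [hM.dotProduct_mulVec_comm (X t)]
  ring

end Calculus

namespace Matrix.PosDef

variable {n : Type*} [Fintype n] {M : Matrix n n ℝ}

theorem exists_pos_mul_norm_sq_le (hM : M.PosDef) :
    ∃ c > 0, ∀ x : n → ℝ, c * ‖x‖ ^ 2 ≤ x ⬝ᵥ M *ᵥ x := by
  have hcont : Continuous fun x : n → ℝ => x ⬝ᵥ M *ᵥ x := by
    simp only [dotProduct, mulVec]
    fun_prop
  obtain ⟨c, hc, hcM⟩ := (isCompact_sphere (0 : n → ℝ) 1).exists_forall_le' hcont.continuousOn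
    fun x hx => hM.dotProduct_mulVec_pos (ne_zero_of_mem_unit_sphere ⟨x, hx⟩)
  refine ⟨c, hc, fun x => ?_⟩
  rcases eq_or_ne x 0 with rfl | hx
  · simp
  have hx' : 0 < ‖x‖ := norm_pos_iff.2 hx
  have hc_le := hcM (‖x‖⁻¹ • x) (by simp [norm_smul, hx'.ne'])
  rw [mulVec_smul, smul_dotProduct, dotProduct_smul, smul_eq_mul, smul_eq_mul] at hc_le
  calc c * ‖x‖ ^ 2 ≤ ‖x‖⁻¹ * (‖x‖⁻¹ * (x ⬝ᵥ M *ᵥ x)) * ‖x‖ ^ 2 := by gcongr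
    _ = x ⬝ᵥ M *ᵥ x := by field_simp

theorem isBounded_setOf_dotProduct_mulVec_le (hM : M.PosDef) (a : ℝ) :
    Bornology.IsBounded {x : n → ℝ | x ⬝ᵥ M *ᵥ x ≤ a} := by
  obtain ⟨c, hc, hcM⟩ := hM.exists_pos_mul_norm_sq_le
  refine isBounded_iff_forall_norm_le.2 ⟨√(a / c), fun x hx => ?_⟩
  refine Real.le_sqrt_of_sq_le ((le_div_iff₀ hc).2 ?_)
  linarith [hcM x, hx.out]

end Matrix.PosDef

section SmallOscillations

variable {n : Type*} [Fintype n]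

def oscillationEnergy (A B : Matrix n n ℝ) (y v : n → ℝ) : ℝ :=
  v ⬝ᵥ A *ᵥ v + y ⬝ᵥ B *ᵥ y

theorem dotProduct_mulVec_le_oscillationEnergy {A : Matrix n n ℝ} (hA : A.PosSemidef)
    (B : Matrix n n ℝ) (y v : n → ℝ) : y ⬝ᵥ B *ᵥ y ≤ oscillationEnergy A B y v := by
  have hkinetic : 0 ≤ v ⬝ᵥ A *ᵥ v := by simpa using hA.dotProduct_mulVec_nonneg v
  unfold oscillationEnergy
  linarith

theorem oscillationEnergy_eq {A B : Matrix n n ℝ} (hA : A.IsHermitian) (hB : B.IsHermitian)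
    {Y V W : ℝ → n → ℝ} (hY : ∀ t, HasDerivAt Y (V t) t) (hV : ∀ t, HasDerivAt V (W t) t)
    (heq : ∀ t, A *ᵥ W t + B *ᵥ Y t = 0) (t s : ℝ) :
    oscillationEnergy A B (Y t) (V t) = oscillationEnergy A B (Y s) (V s) := by
  have hE : ∀ u, HasDerivAt (fun r => oscillationEnergy A B (Y r) (V r)) 0 u := fun u => by
    refine ((hA.hasDerivAt_dotProduct_mulVec_self (hV u)).add
      (hB.hasDerivAt_dotProduct_mulVec_self (hY u))).congr_deriv ?_
    rw [hA.dotProduct_mulVec_comm, ← mul_add, ← dotProduct_add, heq, dotProduct_zero, mul_zero]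
  exact is_const_of_deriv_eq_zero (fun u => (hE u).differentiableAt) (fun u => (hE u).deriv) t s

end SmallOscillations

theorem small_oscillations_bounded_general
    {n : Type*} [Fintype n]
    (A B : Matrix n n ℝ) (hA : A.PosDef) (hB : B.PosDef)
    (Y V W : ℝ → (n → ℝ))
    (hY : ∀ (t : ℝ) (i : n), HasDerivAt (fun s => Y s i) (V t i) t)
    (hV : ∀ (t : ℝ) (i : n), HasDerivAt (fun s => V s i) (W t i) t)
    (heq : ∀ t : ℝ, A.mulVec (W t) + B.mulVec (Y t) = 0) :
    Bornology.IsBounded (Set.range Y) := by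
  have hE := oscillationEnergy_eq hA.isHermitian hB.isHermitian
    (fun t => hasDerivAt_pi.2 (hY t)) (fun t => hasDerivAt_pi.2 (hV t)) heq
  refine (hB.isBounded_setOf_dotProduct_mulVec_le (oscillationEnergy A B (Y 0) (V 0))).subset ?_
  rintro _ ⟨t, rfl⟩
  exact (dotProduct_mulVec_le_oscillationEnergy hA.posSemidef B (Y t) (V t)).trans_eq (hE t 0)

theorem small_oscillations_bounded
    {n : Type*} [Fintype n] [DecidableEq n]
    (A B : Matrix n n ℝ) (hA : A.PosDef) (hB : B.PosDef)
    (Y V W : ℝ → (n → ℝ))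
    (hY : ∀ (t : ℝ) (i : n), HasDerivAt (fun s => Y s i) (V t i) t)
    (hV : ∀ (t : ℝ) (i : n), HasDerivAt (fun s => V s i) (W t i) t)
    (heq : ∀ t : ℝ, A.mulVec (W t) + B.mulVec (Y t) = 0) :
    Bornology.IsBounded (Set.range Y) :=
  small_oscillations_bounded_general A B hA hB Y V W hY hV heq
end

section
/- Let K be a field, n a finite type with decidable equality, A : Matrix n n K, and λ : K a simple root of the characteristic polynomial: (Matrix.charpoly A).rootMultiplicity λ = 1. Then the adjugate N := Matrix.adjugate (λ • (1 : Matrix n n K) − A) is nonzero, and every column of N is an eigenvector relation: for all j : n, A.mulVec (fun i => N i j) = λ • (fun i => N i j). (The polynomial expression, due to Lagrange 1766 and made explicit by Cauchy 1829, of the solutions of the linear system attached to a simple characteristic root as quotients of minors of the characteristic determinant.) -/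
/-!
For `M = l • 1 - A`, `det M = χ_A(l) = 0`, so `M * adjugate M = det M • 1 = 0`, i.e. the columns of
`adjugate M` lie in the `l`-eigenspace. If `adjugate M` vanished, every entry of
`adjugate (X • 1 - A)` would be divisible by `X - l`, say `adjugate (X • 1 - A) = (X - l) • N`.
With `χ_A = (X - l) q`, cancelling `X - l` in `adjugate (X • 1 - A) * (X • 1 - A) = χ_A • 1` gives
`N * (X • 1 - A) = q • 1`, so `det N * χ_A = q ^ card n`. Hence `X - l` divides `q` and `l` is a
multiple root of `χ_A`.
-/

open Polynomial Matrix

theorem Polynomial.exists_eq_X_sub_C_smul_of_map_eval_eq_zero {R : Type*} [CommRing R]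
    {m n : Type*} {P : Matrix m n R[X]} {l : R} (h : P.map (eval l) = 0) :
    ∃ Q : Matrix m n R[X], P = (X - C l) • Q :=
  ⟨P.map (· /ₘ (X - C l)), Matrix.ext fun i j =>
    (mul_divByMonic_eq_iff_isRoot.mpr (congrFun (congrFun h i) j)).symm⟩

namespace Matrix

variable {R : Type*} [CommRing R] {n : Type*} [Fintype n] [DecidableEq n]

theorem charmatrix_map_evalRingHom (A : Matrix n n R) (l : R) :
    (charmatrix A).map (evalRingHom l) = l • 1 - A := by
  ext i j
  obtain rfl | hij := eq_or_ne i j <;> simp [*]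

theorem det_smul_one_sub_eq_eval_charpoly (A : Matrix n n R) (l : R) :
    (l • 1 - A).det = A.charpoly.eval l := by
  rw [← charmatrix_map_evalRingHom, ← RingHom.mapMatrix_apply, ← RingHom.map_det]
  rfl

theorem mul_adjugate_smul_one_sub (A : Matrix n n R) (l : R) :
    A * adjugate (l • 1 - A) = l • adjugate (l • 1 - A) - (l • 1 - A).det • 1 := by
  rw [← mul_adjugate, sub_mul, smul_mul, one_mul, sub_sub_cancel]

theorem mulVec_adjugate_col_of_det_eq_zero {A : Matrix n n R} {l : R} (h : (l • 1 - A).det = 0)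
    (j : n) : A *ᵥ (fun i => adjugate (l • 1 - A) i j) = l • fun i => adjugate (l • 1 - A) i j := by
  have hA := mul_adjugate_smul_one_sub A l
  rw [h, zero_smul, sub_zero] at hA
  funext i
  exact congrFun (congrFun hA i) j

theorem sq_X_sub_C_dvd_charpoly_of_adjugate_eq_zero [IsDomain R] {A : Matrix n n R} {l : R}
    (hroot : A.charpoly.IsRoot l) (h : adjugate (l • 1 - A) = 0) :
    (X - C l) ^ 2 ∣ A.charpoly := by
  obtain ⟨q, hq⟩ := dvd_iff_isRoot.mpr hroot
  obtain ⟨N, hN⟩ : ∃ N, adjugate (charmatrix A) = (X - C l) • N := by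
    refine exists_eq_X_sub_C_smul_of_map_eval_eq_zero ?_
    rw [← h, ← charmatrix_map_evalRingHom, ← RingHom.mapMatrix_apply, ← RingHom.map_adjugate]
    rfl
  have hNq : N * charmatrix A = q • 1 := by
    refine smul_right_injective _ (X_sub_C_ne_zero l) ?_
    simp only [← smul_mul, ← hN, adjugate_mul, smul_smul, ← hq]
    rfl
  have hdvd : X - C l ∣ q ^ Fintype.card n := by
    have hdet := congrArg det hNq
    rw [det_mul, det_smul, det_one, mul_one, ← charpoly, hq] at hdet
    exact ⟨N.det * q, by rw [← hdet]; ring⟩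
  obtain ⟨r, rfl⟩ := (prime_X_sub_C l).dvd_of_dvd_pow hdvd
  exact ⟨r, by rw [hq]; ring⟩

end Matrix

theorem adjugate_columns_eigenvectors_of_simple_root
    {K : Type*} [Field K] {n : Type*} [Fintype n] [DecidableEq n]
    (A : Matrix n n K) (l : K)
    (hl : (Matrix.charpoly A).rootMultiplicity l = 1) :
    Matrix.adjugate (l • (1 : Matrix n n K) - A) ≠ 0 ∧
    ∀ j : n,
      A.mulVec (fun i => Matrix.adjugate (l • (1 : Matrix n n K) - A) i j) =
        l • (fun i => Matrix.adjugate (l • (1 : Matrix n n K) - A) i j) := by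
  have hp : A.charpoly ≠ 0 := A.charpoly_monic.ne_zero
  have hroot : A.charpoly.IsRoot l := (rootMultiplicity_pos hp).mp (by omega)
  have hdet : (l • 1 - A).det = 0 := by rwa [det_smul_one_sub_eq_eval_charpoly]
  refine ⟨fun hzero => ?_, mulVec_adjugate_col_of_det_eq_zero hdet⟩
  have := (le_rootMultiplicity_iff hp).mpr
    (sq_X_sub_C_dvd_charpoly_of_adjugate_eq_zero hroot hzero)
  omega
end

section
/- Let n be a nonempty finite type with decidable equality and let A : Matrix n n ℝ be symmetric. Then there exists x : n → ℝ with x ⬝ᵥ x = 1 such that: (i) x maximizes the quadratic form on the unit sphere, i.e., for all y with y ⬝ᵥ y = 1 one has y ⬝ᵥ A.mulVec y ≤ x ⬝ᵥ A.mulVec x; (ii) x is an eigenvector with the maximum as eigenvalue, A.mulVec x = (x ⬝ᵥ A.mulVec x) • x; and (iii) the maximum value is a root of the characteristic polynomial, (Matrix.charpoly A).IsRoot (x ⬝ᵥ A.mulVec x). (Cauchy's 1829 variational approach: the maxima and minima of a homogeneous function of the second degree subject to x₁² + x₂² + ⋯ = 1 are roots of the equation S = 0, the same equation that occurs in the theory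 of the secular inequalities of the planets.) -/
/-!
The unit sphere is compact, so the quadratic form `y ↦ y ⬝ᵥ A *ᵥ y` attains its maximum on it at
some `x`. At a constrained extremum the gradient `2 A x` of the form is a Lagrange multiple of the
gradient `2 x` of the constraint, so `x` is an eigenvector of `A`; pairing with `x` shows that the
eigenvalue is the maximum itself. An eigenvalue makes `det (μ - A)` vanish, i.e. is a root of the
characteristic polynomial.
-/

open Polynomial Matrix

open Metric in
theorem IsSelfAdjoint.exists_isMaxOn_sphere_eq_smul {E : Type*} [NormedAddCommGroup E]
    [InnerProductSpace ℝ E] [FiniteDimensional ℝ E] [Nontrivial E]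
    {T : E →L[ℝ] E} (hT : IsSelfAdjoint T) :
    ∃ x ∈ sphere (0 : E) 1,
      IsMaxOn T.reApplyInnerSelf (sphere 0 1) x ∧ T x = T.reApplyInnerSelf x • x := by
  obtain ⟨x, hx, hmax⟩ := (isCompact_sphere (0 : E) 1).exists_isMaxOn
    (NormedSpace.sphere_nonempty.2 zero_le_one) T.reApplyInnerSelf_continuous.continuousOn
  have hnorm : ‖x‖ = 1 := mem_sphere_zero_iff_norm.1 hx
  refine ⟨x, hx, hmax, ?_⟩
  have hlagrange := hT.eq_smul_self_of_isLocalExtrOn_real (x₀ := x)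
    (by rw [hnorm]; exact Or.inr hmax.localize)
  rwa [ContinuousLinearMap.rayleighQuotient, hnorm, one_pow, div_one] at hlagrange

theorem Matrix.isRoot_charpoly_of_mulVec_eq_smul {n R : Type*} [Fintype n] [DecidableEq n]
    [CommRing R] [IsDomain R] {A : Matrix n n R} {x : n → R} {μ : R} (hx : x ≠ 0)
    (hAx : A *ᵥ x = μ • x) : A.charpoly.IsRoot μ := by
  rw [← charpoly_toLin', ← Module.End.hasEigenvalue_iff_isRoot_charpoly]
  exact Module.End.hasEigenvalue_of_hasEigenvector ⟨Module.End.mem_eigenspace_iff.2 hAx, hx⟩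

theorem EuclideanSpace.norm_sq_eq_dotProduct {n : Type*} [Fintype n] (x : EuclideanSpace ℝ n) :
    ‖x‖ ^ 2 = x.ofLp ⬝ᵥ x.ofLp := by
  rw [← real_inner_self_eq_norm_sq, EuclideanSpace.inner_eq_star_dotProduct, star_trivial]

theorem Matrix.reApplyInnerSelf_toEuclideanCLM {n : Type*} [Fintype n] [DecidableEq n]
    (A : Matrix n n ℝ) (x : EuclideanSpace ℝ n) :
    (toEuclideanCLM (𝕜 := ℝ) A).reApplyInnerSelf x = x.ofLp ⬝ᵥ A *ᵥ x.ofLp := by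
  rw [ContinuousLinearMap.reApplyInnerSelf_apply, RCLike.re_to_real, real_inner_comm,
    inner_toEuclideanCLM]

theorem Matrix.IsSymm.exists_isMax_quadForm_sphere_eq_smul {n : Type*} [Fintype n] [DecidableEq n]
    [Nonempty n] {A : Matrix n n ℝ} (hA : A.IsSymm) :
    ∃ x : n → ℝ, x ⬝ᵥ x = 1 ∧
      (∀ y : n → ℝ, y ⬝ᵥ y = 1 → y ⬝ᵥ A *ᵥ y ≤ x ⬝ᵥ A *ᵥ x) ∧ A *ᵥ x = (x ⬝ᵥ A *ᵥ x) • x := by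
  have hT : IsSelfAdjoint (toEuclideanCLM (𝕜 := ℝ) A) :=
    (isHermitian_iff_isSymm.2 hA).isSelfAdjoint.map _
  have mem_sphere (y : EuclideanSpace ℝ n) : y ∈ Metric.sphere 0 1 ↔ y.ofLp ⬝ᵥ y.ofLp = 1 := by
    rw [mem_sphere_zero_iff_norm, ← pow_eq_one_iff_of_nonneg (norm_nonneg y) two_ne_zero,
      EuclideanSpace.norm_sq_eq_dotProduct]
  obtain ⟨x, hx, hmax, heig⟩ := hT.exists_isMaxOn_sphere_eq_smul
  simp only [reApplyInnerSelf_toEuclideanCLM] at hmax heig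
  refine ⟨x.ofLp, (mem_sphere x).1 hx, fun y hy => hmax ((mem_sphere (WithLp.toLp 2 y)).2 hy),
    congrArg WithLp.ofLp heig⟩

theorem cauchy_variational_max_eigenvalue
    {n : Type*} [Fintype n] [DecidableEq n] [Nonempty n]
    (A : Matrix n n ℝ) (hA : A.IsSymm) :
    ∃ x : n → ℝ, x ⬝ᵥ x = 1 ∧
      (∀ y : n → ℝ, y ⬝ᵥ y = 1 → y ⬝ᵥ A.mulVec y ≤ x ⬝ᵥ A.mulVec x) ∧
      A.mulVec x = (x ⬝ᵥ A.mulVec x) • x ∧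
      (Matrix.charpoly A).IsRoot (x ⬝ᵥ A.mulVec x) := by
  obtain ⟨x, hx, hmax, heig⟩ := hA.exists_isMax_quadForm_sphere_eq_smul
  have hx0 : x ≠ 0 := by
    rintro rfl
    simp at hx
  exact ⟨x, hx, hmax, heig, isRoot_charpoly_of_mulVec_eq_smul hx0 heig⟩
end

section
/- Let n be a finite type with decidable equality, A : Matrix n n ℂ, and Y : ℝ → (n → ℂ) a solution of the first-order linear system: for all t : ℝ and i : n, HasDerivAt (fun s => Y s i) ((A.mulVec (Y t)) i) t. Let R := ((Matrix.charpoly A).roots).toFinset. Then for each coordinate i : n there is a family of polynomials p : ℂ → Polynomial ℂ such that (p λ).degree < ((Matrix.charpoly A).rootMultiplicity λ : ℕ) for every λ ∈ R, and for all t : ℝ, Y t i = Σ_{λ ∈ R} (p λ).eval (t : ℂ) * Complex.exp (λ * t). (Jordan's 1871 solution of linear constant-coefficient differential systems: each coordinate of a solution is e^{σt}·ψ(t) summed over the characteristic roots σ, with ψ a polynomial of degree less than the multiplicity of σ.) -/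
/-!
By Cayley–Hamilton, `∏_λ (A - λ) = 0`, the product running over the characteristic roots with
multiplicity. Induct on a multiset `M` with `B * ∏_{λ ∈ M} (A - λ) = 0`: for `M = λ ::ₘ M'`, a
coordinate `f` of `B Y` satisfies `f' = λ f + g` with `g` a coordinate of `B (A - λ) Y`, which by
induction is an exponential polynomial `∑ p_μ(t) e^{μt}` with `deg p_μ < count μ M'`. A particular
solution is `∑ q_μ(t) e^{μt}` with `q_μ' + (μ - λ) q_μ = p_μ`, which raises the degree only for
`μ = λ`; the rest of `f` solves `h' = λ h`, so it is `c e^{λt}`.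
-/

open Polynomial Matrix
open scoped Complex

namespace Polynomial

variable {K : Type*} [Field K]

noncomputable def antiderivative [CharZero K] (p : K[X]) : K[X] :=
  ∑ k ∈ Finset.range (p.natDegree + 1), monomial (k + 1) (p.coeff k / (k + 1))

theorem derivative_antiderivative [CharZero K] (p : K[X]) :
    derivative (antiderivative p) = p := by
  conv_rhs => rw [p.as_sum_range]
  simp only [antiderivative, map_sum, derivative_monomial, Nat.add_sub_cancel, Nat.cast_add,
    Nat.cast_one]
  refine Finset.sum_congr rfl fun k _ => ?_
  rw [div_mul_cancel₀ _ (Nat.cast_add_one_ne_zero k)]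

theorem degree_antiderivative_lt [CharZero K] {p : K[X]} {m : ℕ} (hp : p.degree < m) :
    (antiderivative p).degree < ↑(m + 1) := by
  rw [degree_lt_iff_coeff_zero] at hp ⊢
  intro j hj
  simp only [antiderivative, finsetSum_coeff, coeff_monomial]
  refine Finset.sum_eq_zero fun k _ => ?_
  split_ifs with hk
  · rw [hp k (by omega), zero_div]
  · rfl

theorem degree_iterate_derivative_le (p : K[X]) (k : ℕ) :
    (derivative^[k] p).degree ≤ p.degree := by
  induction k with
  | zero => rfl
  | succ k ih =>
    rw [Function.iterate_succ_apply']
    exact degree_derivative_le.trans ih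

theorem exists_derivative_add_C_mul_eq {c : K} (hc : c ≠ 0) (p : K[X]) :
    ∃ q : K[X], derivative q + C c * q = p ∧ q.degree ≤ p.degree := by
  -- `q = (D + c)⁻¹ p`, a finite Neumann series since `D` is nilpotent on polynomials
  set a : ℕ → K := fun k => (-1) ^ k / c ^ (k + 1)
  refine ⟨∑ k ∈ Finset.range (p.natDegree + 1), a k • derivative^[k] p, ?_, ?_⟩
  · have telescope : ∀ k,
        derivative (a k • derivative^[k] p) + C c * (a k • derivative^[k] p) =
          (c * a k) • derivative^[k] p - (c * a (k + 1)) • derivative^[k + 1] p := by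
      intro k
      have ha : c * a (k + 1) = -a k := by
        simp only [a]
        field_simp
        ring
      rw [derivative_smul, mul_smul_comm, C_mul', smul_smul, ha, neg_smul, sub_neg_eq_add,
        Function.iterate_succ_apply', add_comm, mul_comm]
    rw [map_sum, Finset.mul_sum, ← Finset.sum_add_distrib,
      Finset.sum_congr rfl fun k _ => telescope k, Finset.sum_range_sub',
      iterate_derivative_eq_zero (Nat.lt_succ_self _)]
    simp [a, hc]
  · refine (degree_sum_le _ _).trans (Finset.sup_le fun k _ => ?_)
    exact (degree_smul_le _ _).trans (degree_iterate_derivative_le p k)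

theorem exists_derivative_add_C_mul_eq_of_degree_lt [CharZero K] [DecidableEq K] (c : K)
    {p : K[X]} {m : ℕ} (hp : p.degree < m) :
    ∃ q : K[X], derivative q + C c * q = p ∧ q.degree < ↑(m + if c = 0 then 1 else 0) := by
  by_cases hc : c = 0
  · exact ⟨antiderivative p, by simp [hc, derivative_antiderivative],
      by simpa [hc] using degree_antiderivative_lt hp⟩
  · obtain ⟨q, hq, hdeg⟩ := exists_derivative_add_C_mul_eq hc p
    exact ⟨q, hq, by simpa [hc] using hdeg.trans_lt hp⟩

end Polynomial

theorem hasDerivAt_cexp_const_mul_ofReal (μ : ℂ) (t : ℝ) :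
    HasDerivAt (fun s : ℝ => cexp (μ * s)) (μ * cexp (μ * t)) t := by
  simpa [mul_comm] using (((hasDerivAt_id t).ofReal_comp).const_mul μ).cexp

theorem hasDerivAt_eval_mul_cexp (q : ℂ[X]) (μ : ℂ) (t : ℝ) :
    HasDerivAt (fun s : ℝ => q.eval (s : ℂ) * cexp (μ * s))
      ((derivative q + C μ * q).eval (t : ℂ) * cexp (μ * t)) t := by
  refine ((q.hasDerivAt (t : ℂ)).comp_ofReal.fun_mul
    (hasDerivAt_cexp_const_mul_ofReal μ t)).congr_deriv ?_
  simp only [eval_add, eval_mul, eval_C]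
  ring

theorem eq_mul_cexp_of_hasDerivAt {lam : ℂ} {h : ℝ → ℂ}
    (hd : ∀ t, HasDerivAt h (lam * h t) t) (t : ℝ) : h t = h 0 * cexp (lam * t) := by
  have hconst : ∀ s, HasDerivAt (fun s : ℝ => h s * cexp (-lam * s)) 0 s := fun s => by
    refine ((hd s).fun_mul (hasDerivAt_cexp_const_mul_ofReal (-lam) s)).congr_deriv ?_
    ring
  have := is_const_of_deriv_eq_zero (fun s => (hconst s).differentiableAt)
    (fun s => (hconst s).deriv) t 0
  simp only [Complex.ofReal_zero, mul_zero, Complex.exp_zero, mul_one] at this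
  rw [← this, mul_assoc, ← Complex.exp_add]
  simp

noncomputable def expPolynomials (M : Multiset ℂ) : Submodule ℂ (ℝ → ℂ) where
  carrier := {f | ∃ p : ℂ → ℂ[X], (∀ μ, (p μ).degree < M.count μ) ∧
    ∀ t : ℝ, f t = ∑ μ ∈ M.toFinset, (p μ).eval (t : ℂ) * cexp (μ * t)}
  zero_mem' := ⟨0, fun _ => by simp, by simp⟩
  add_mem' := by
    rintro f g ⟨p, hp, hf⟩ ⟨q, hq, hg⟩
    exact ⟨p + q, fun μ => (degree_add_le _ _).trans_lt (max_lt (hp μ) (hq μ)), fun t => by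
      simp [hf t, hg t, add_mul, Finset.sum_add_distrib]⟩
  smul_mem' := by
    rintro a f ⟨p, hp, hf⟩
    exact ⟨a • p, fun μ => (degree_smul_le a (p μ)).trans_lt (hp μ), fun t => by
      simp [hf t, Finset.mul_sum, mul_assoc]⟩

theorem eval_mul_cexp_mem_expPolynomials {M : Multiset ℂ} {μ : ℂ} {q : ℂ[X]}
    (hq : q.degree < M.count μ) :
    (fun t : ℝ => q.eval (t : ℂ) * cexp (μ * t)) ∈ expPolynomials M := by
  by_cases hμ : μ ∈ M
  · refine ⟨fun ν => if ν = μ then q else 0, fun ν => ?_, fun t => ?_⟩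
    · dsimp only
      split_ifs with h
      · exact h ▸ hq
      · simp
    · simp [apply_ite (eval _), ite_mul, hμ]
  · obtain rfl : q = 0 := by
      simpa [Multiset.count_eq_zero_of_notMem hμ] using hq
    simp only [eval_zero, zero_mul]
    exact zero_mem _

theorem mem_expPolynomials_cons_of_hasDerivAt {M : Multiset ℂ} {lam : ℂ} {f g : ℝ → ℂ}
    (hg : g ∈ expPolynomials M) (hf : ∀ t, HasDerivAt f (lam * f t + g t) t) :
    f ∈ expPolynomials (lam ::ₘ M) := by
  obtain ⟨p, hp, hg⟩ := hg
  choose q hq hq_deg using fun μ =>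
    exists_derivative_add_C_mul_eq_of_degree_lt (μ - lam) (hp μ)
  set F : ℝ → ℂ := ∑ μ ∈ M.toFinset, fun t : ℝ => (q μ).eval (t : ℂ) * cexp (μ * t) with hF
  have hF_mem : F ∈ expPolynomials (lam ::ₘ M) :=
    Submodule.sum_mem _ fun μ _ => eval_mul_cexp_mem_expPolynomials <| by
      simpa [Multiset.count_cons, sub_eq_zero] using hq_deg μ
  have hF_deriv : ∀ t, HasDerivAt F (lam * F t + g t) t := fun t => by
    refine (HasDerivAt.sum fun μ _ => hasDerivAt_eval_mul_cexp (q μ) μ t).congr_deriv ?_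
    rw [hg t, hF, Finset.sum_apply, Finset.mul_sum, ← Finset.sum_add_distrib]
    refine Finset.sum_congr rfl fun μ _ => ?_
    rw [← hq μ]
    simp only [eval_add, eval_mul, eval_C]
    ring
  have hf_sub_F := eq_mul_cexp_of_hasDerivAt (h := f - F) fun t =>
    ((hf t).sub (hF_deriv t)).congr_deriv (by simp only [Pi.sub_apply]; ring)
  have hf_eq : f = F + fun t : ℝ => (C ((f - F) 0)).eval (t : ℂ) * cexp (lam * t) := by
    ext t
    have := hf_sub_F t
    simp only [Pi.add_apply, Pi.sub_apply, eval_C] at this ⊢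
    linear_combination this
  rw [hf_eq]
  refine add_mem hF_mem (eval_mul_cexp_mem_expPolynomials (degree_C_le.trans_lt ?_))
  exact_mod_cast Multiset.count_pos.2 (Multiset.mem_cons_self lam M)

theorem mulVec_apply_mem_expPolynomials {n : Type*} [Fintype n] [DecidableEq n]
    {A : Matrix n n ℂ} {Y : ℝ → n → ℂ} (hY : ∀ t, HasDerivAt Y (A *ᵥ Y t) t)
    (M : Multiset ℂ) (B : Matrix n n ℂ) (hB : B * aeval A (M.map fun μ => X - C μ).prod = 0)
    (i : n) : (fun t => (B *ᵥ Y t) i) ∈ expPolynomials M := by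
  induction M using Multiset.induction_on generalizing B with
  | empty =>
    obtain rfl : B = 0 := by simpa using hB
    simp only [zero_mulVec, Pi.zero_apply]
    exact zero_mem _
  | cons lam M ih =>
    have hB' : (B * (A - lam • 1)) * aeval A (M.map fun μ => X - C μ).prod = 0 := by
      simpa [mul_assoc, Algebra.algebraMap_eq_smul_one] using hB
    refine mem_expPolynomials_cons_of_hasDerivAt (ih _ hB') fun t => ?_
    have hBY : HasDerivAt (fun s => B *ᵥ Y s) (B *ᵥ (A *ᵥ Y t)) t :=
      ((mulVecLin B).toContinuousLinearMap.restrictScalars ℝ).hasFDerivAt.comp_hasDerivAt t (hY t)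
    refine (hasDerivAt_pi.1 hBY i).congr_deriv ?_
    simp [Matrix.mul_sub, sub_mulVec, mulVec_mulVec, smul_mulVec]

theorem jordan_solution_linear_ode_system
    {n : Type*} [Fintype n] [DecidableEq n]
    (A : Matrix n n ℂ) (Y : ℝ → (n → ℂ))
    (hY : ∀ (t : ℝ) (i : n), HasDerivAt (fun s => Y s i) ((A.mulVec (Y t)) i) t) :
    ∀ i : n, ∃ p : ℂ → Polynomial ℂ,
      (∀ l ∈ ((Matrix.charpoly A).roots).toFinset,
        (p l).degree < ((Matrix.charpoly A).rootMultiplicity l : WithBot ℕ)) ∧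
      ∀ t : ℝ, Y t i =
        ∑ l ∈ ((Matrix.charpoly A).roots).toFinset,
          (p l).eval (t : ℂ) * Complex.exp (l * t) := by
  intro i
  have cayley_hamilton : 1 * aeval A (A.charpoly.roots.map fun μ => X - C μ).prod = 0 := by
    rw [one_mul, prod_multiset_X_sub_C_of_monic_of_roots_card_eq A.charpoly_monic
      IsAlgClosed.card_roots_eq_natDegree, aeval_self_charpoly]
  obtain ⟨p, hp, hY_eq⟩ := mulVec_apply_mem_expPolynomials (fun t => hasDerivAt_pi.2 (hY t))
    A.charpoly.roots 1 cayley_hamilton i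
  exact ⟨p, fun l _ => count_roots A.charpoly ▸ hp l, fun t => by simpa using hY_eq t⟩
end

section
/- Let n be a finite type with decidable equality and A : Matrix n n ℂ. Then A is diagonalizable — i.e., there exists an invertible P : Matrix n n ℂ and d : n → ℂ with P⁻¹ * A * P = Matrix.diagonal d — if and only if for every μ : ℂ the algebraic multiplicity equals the geometric multiplicity: (Matrix.charpoly A).rootMultiplicity μ = finrank ℂ (Module.End.eigenspace A.mulVecLin μ). (Jordan's 1871 criterion, in response to Yvon-Villarceau, for a linear system to reduce to distinct equations dyᵢ/dt = σyᵢ that can be integrated separately: each characteristic root of multiplicity μ must annihilate the appropriate minors of the characteristic determinant, i.e., have an eigenspace of full dimension μ.) -/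
/-!
The algebraic multiplicity of `μ` is the dimension of the generalized eigenspace of `μ`, which
contains the eigenspace; so the two multiplicities agree for every `μ` exactly when every
eigenspace equals its generalized eigenspace. Over `ℂ` the generalized eigenspaces are independent
and span the whole space, hence this happens exactly when the eigenspaces span, i.e. when there is
a basis of eigenvectors. Such a basis, written as the columns of `P`, is the same thing as a
diagonalization `P⁻¹ * A * P = diagonal d`.
-/

open Polynomial Matrix

namespace Module.End

variable {K V : Type*} [Field K] [AddCommGroup V] [Module K V] [FiniteDimensional K V]

theorem rootMultiplicity_charpoly_eq_finrank_eigenspace_iff (f : End K V) (μ : K) :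
    f.charpoly.rootMultiplicity μ = finrank K (f.eigenspace μ) ↔
      f.eigenspace μ = f.maxGenEigenspace μ := by
  rw [← LinearMap.finrank_maxGenEigenspace_eq, eq_comm]
  exact ⟨fun h ↦ Submodule.eq_of_le_of_finrank_eq eigenspace_le_maxGenEigenspace h,
    fun h ↦ by rw [h]⟩

theorem iSup_eigenspace_eq_top_iff_forall_eigenspace_eq_maxGenEigenspace [IsAlgClosed K]
    (f : End K V) :
    ⨆ μ, f.eigenspace μ = ⊤ ↔ ∀ μ, f.eigenspace μ = f.maxGenEigenspace μ := by
  refine ⟨fun h ↦ funext_iff.mp ?_, fun h ↦ ?_⟩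
  · exact (f.independent_maxGenEigenspace.le_iff_eq_of_iSup_eq_top h).mp
      fun _ ↦ eigenspace_le_maxGenEigenspace
  · simpa only [h] using f.iSup_maxGenEigenspace_eq_top

theorem iSup_eigenspace_eq_top_iff_forall_rootMultiplicity_eq [IsAlgClosed K] (f : End K V) :
    ⨆ μ, f.eigenspace μ = ⊤ ↔
      ∀ μ, f.charpoly.rootMultiplicity μ = finrank K (f.eigenspace μ) := by
  simp only [rootMultiplicity_charpoly_eq_finrank_eigenspace_iff,
    iSup_eigenspace_eq_top_iff_forall_eigenspace_eq_maxGenEigenspace]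

theorem exists_basis_apply_eq_smul_iff_iSup_eigenspace_eq_top {ι : Type*} [Fintype ι]
    (f : End K V) (hι : finrank K V = Fintype.card ι) :
    (∃ (b : Basis ι K V) (d : ι → K), ∀ i, f (b i) = d i • b i) ↔ ⨆ μ, f.eigenspace μ = ⊤ := by
  classical
  refine ⟨fun ⟨b, d, hbd⟩ ↦ (Submodule.eq_top_iff_forall_basis_mem b).mpr fun i ↦
    Submodule.mem_iSup_of_mem (d i) (mem_eigenspace_iff.mpr (hbd i)), fun h ↦ ?_⟩
  have hint : DirectSum.IsInternal f.eigenspace :=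
    (DirectSum.isInternal_submodule_iff_iSupIndep_and_iSup_eq_top _).mpr
      ⟨f.eigenspaces_iSupIndep, h⟩
  let v μ := Module.finBasis K (f.eigenspace μ)
  let b := hint.collectedBasis v
  have := FiniteDimensional.fintypeBasisIndex b
  let e := Fintype.equivOfCardEq ((finrank_eq_card_basis b).symm.trans hι)
  exact ⟨b.reindex e, fun i ↦ (e.symm i).1, fun i ↦ by
    rw [b.reindex_apply]; exact mem_eigenspace_iff.mp (hint.collectedBasis_mem v (e.symm i))⟩

end Module.End

theorem LinearMap.toMatrix_eq_diagonal_iff {R M ι : Type*} [CommRing R] [AddCommGroup M]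
    [Module R M] [Fintype ι] [DecidableEq ι] (b : Module.Basis ι R M) (f : Module.End R M)
    (d : ι → R) :
    LinearMap.toMatrix b b f = diagonal d ↔ ∀ i, f (b i) = d i • b i := by
  rw [← (Matrix.toLin b b).injective.eq_iff, Matrix.toLin_toMatrix]
  refine ⟨fun h i ↦ ?_, fun h ↦ b.ext fun i ↦ ?_⟩ <;> simp [h, Matrix.toLin_self, diagonal_apply]

namespace Matrix

variable {R n : Type*} [CommRing R] [Fintype n] [DecidableEq n]

theorem inv_basisFun_toMatrix_mul_mul (A : Matrix n n R) (b : Module.Basis n R (n → R)) :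
    ((Pi.basisFun R n).toMatrix b)⁻¹ * A * (Pi.basisFun R n).toMatrix b =
      LinearMap.toMatrix b b A.mulVecLin := by
  rw [inv_eq_left_inv (b.toMatrix_mul_toMatrix_flip _),
    ← basis_toMatrix_mul_linearMap_toMatrix_mul_basis_toMatrix b (Pi.basisFun R n) b
      (Pi.basisFun R n),
    LinearMap.toMatrix_eq_toMatrix', ← toLin'_apply', LinearMap.toMatrix'_toLin']

theorem exists_basisFun_toMatrix_eq {P : Matrix n n R} (hP : IsUnit P.det) :
    ∃ b : Module.Basis n R (n → R), (Pi.basisFun R n).toMatrix b = P := by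
  refine ⟨(Pi.basisFun R n).map (P.toLinearEquiv' (P.invertibleOfIsUnitDet hP)), ?_⟩
  ext i j
  simp only [Module.Basis.toMatrix_apply, Module.Basis.map_apply, Pi.basisFun_apply,
    ← LinearEquiv.coe_coe, toLinearEquiv'_apply]
  simp

theorem exists_inv_mul_mul_eq_diagonal_iff (A : Matrix n n R) :
    (∃ (P : Matrix n n R) (d : n → R), IsUnit P.det ∧ P⁻¹ * A * P = diagonal d) ↔
      ∃ (b : Module.Basis n R (n → R)) (d : n → R), ∀ i, A.mulVecLin (b i) = d i • b i := by
  simp only [← LinearMap.toMatrix_eq_diagonal_iff, ← inv_basisFun_toMatrix_mul_mul]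
  constructor
  · rintro ⟨P, d, hP, hPd⟩
    obtain ⟨b, rfl⟩ := exists_basisFun_toMatrix_eq hP
    exact ⟨b, d, hPd⟩
  · rintro ⟨b, d, hbd⟩
    have := (Pi.basisFun R n).invertibleToMatrix b
    exact ⟨_, d, isUnit_det_of_invertible _, hbd⟩

end Matrix

theorem diagonalizable_iff_algebraic_eq_geometric
    {n : Type*} [Fintype n] [DecidableEq n]
    (A : Matrix n n ℂ) :
    (∃ (P : Matrix n n ℂ) (d : n → ℂ), IsUnit P.det ∧
        P⁻¹ * A * P = Matrix.diagonal d) ↔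
    (∀ μ : ℂ, (Matrix.charpoly A).rootMultiplicity μ =
        Module.finrank ℂ (Module.End.eigenspace A.mulVecLin μ)) := by
  rw [exists_inv_mul_mul_eq_diagonal_iff, ← charpoly_mulVecLin,
    ← Module.End.iSup_eigenspace_eq_top_iff_forall_rootMultiplicity_eq]
  exact Module.End.exists_basis_apply_eq_smul_iff_iSup_eigenspace_eq_top _
    (Module.finrank_fintype_fun_eq_card ℂ)
end
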